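/- arXiv:1912.04777 — 6 statements merged into one kernel-verified Lean document; each statement's English description precedes it below -/
import Mathlib

section
/- Let α ∈ (0,1) and let λ be a nonzero complex number with arg(λ) ∈ (-πα, πα). Then the function f_{α,α}(v) = (sin(απ)/π) · v^α / (v^{2α} - 2λ v^α cos(απ) + λ²) is NOT integrable on (0, ∞), i.e., the integral ∫₀^∞ f_{α,α}(v) dv does not exist as a Lebesgue integral. -/
open Real Set Filter MeasureTheory

theorem stmt_6 (α : ℝ) (hα : α ∈ Set.Ioo (0 : ℝ) 1)
    (lam : ℂ) (hlam : lam ≠ 0) (harg : lam.arg ∈ Set.Ioo (-(π * α)) (π * α)) :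
    ¬ MeasureTheory.IntegrableOn (fun v : ℝ =>
        ((Real.sin (α * π) : ℝ) / (π : ℂ)) * ((v ^ α : ℝ) : ℂ) /
          (((v ^ (2 * α) : ℝ) : ℂ) - 2 * lam * ((v ^ α : ℝ) : ℂ) * (Real.cos (α * π) : ℝ) +
            lam ^ 2))
      (Set.Ioi 0) := by
  intro h
  have hπ := Real.pi_pos
  obtain ⟨hα0, hα1⟩ := hα
  have hs : 0 < Real.sin (α * π) :=
    Real.sin_pos_of_pos_of_lt_pi (by positivity) (by nlinarith)
  set s := Real.sin (α * π) with hsdef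
  set L := ‖lam‖ with hLdef
  have hL0 : 0 ≤ L := norm_nonneg _
  set R : ℝ := max 1 ((8 * L + 1) ^ (1 / α)) with hRdef
  have hR1 : (1 : ℝ) ≤ R := le_max_left _ _
  have hR0 : (0 : ℝ) < R := lt_of_lt_of_le one_pos hR1
  have hc0 : 0 < s / (2 * π) := by positivity
  -- pointwise bound on Ioi R
  have key : ∀ v ∈ Set.Ioi R,
      ‖(s / (2 * π)) * v ^ (-α)‖ ≤
        ‖((s : ℝ) / (π : ℂ)) * ((v ^ α : ℝ) : ℂ) /
          (((v ^ (2 * α) : ℝ) : ℂ) - 2 * lam * ((v ^ α : ℝ) : ℂ) * (Real.cos (α * π) : ℝ) +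
            lam ^ 2)‖ := by
    intro v hv
    have hv0 : (0 : ℝ) < v := lt_trans hR0 hv
    set t := v ^ α with htdef
    have ht0 : 0 < t := Real.rpow_pos_of_pos hv0 α
    have ht : 8 * L + 1 ≤ t := by
      have h1 : ((8 * L + 1) ^ (1 / α)) ^ α ≤ v ^ α := by
        apply Real.rpow_le_rpow (by positivity) _ hα0.le
        exact le_trans (le_max_right _ _) (le_of_lt hv)
      rwa [one_div, Real.rpow_inv_rpow (by positivity) (ne_of_gt hα0)] at h1
    have hv2 : v ^ (2 * α) = t ^ 2 := by
      rw [mul_comm, Real.rpow_mul hv0.le, htdef]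
      norm_num
    set D : ℂ := ((v ^ (2 * α) : ℝ) : ℂ) - 2 * lam * ((t : ℝ) : ℂ) * (Real.cos (α * π) : ℝ) +
        lam ^ 2 with hDdef
    have hcos : |Real.cos (α * π)| ≤ 1 := Real.abs_cos_le_one _
    have hX : ‖2 * lam * ((t : ℝ) : ℂ) * (Real.cos (α * π) : ℝ)‖ ≤ 2 * L * t := by
      rw [norm_mul, norm_mul, norm_mul, Complex.norm_real, Complex.norm_real]
      simp only [Complex.norm_ofNat, Real.norm_eq_abs]
      rw [abs_of_pos ht0]
      calc 2 * ‖lam‖ * t * |Real.cos (α * π)| ≤ 2 * ‖lam‖ * t * 1 := by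
            gcongr
        _ = 2 * L * t := by rw [← hLdef]; ring
    have hlam2 : ‖lam ^ 2‖ = L ^ 2 := by rw [norm_pow]
    have ht2 : ‖((v ^ (2 * α) : ℝ) : ℂ)‖ = t ^ 2 := by
      rw [Complex.norm_real, Real.norm_eq_abs, hv2, abs_of_pos (by positivity)]
    have hDub : ‖D‖ ≤ 2 * t ^ 2 := by
      have h1 : ‖D‖ ≤ ‖((v ^ (2 * α) : ℝ) : ℂ)‖ +
          ‖2 * lam * ((t : ℝ) : ℂ) * (Real.cos (α * π) : ℝ)‖ + ‖lam ^ 2‖ := by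
        calc ‖D‖ ≤ ‖((v ^ (2 * α) : ℝ) : ℂ) - 2 * lam * ((t : ℝ) : ℂ) * (Real.cos (α * π) : ℝ)‖
              + ‖lam ^ 2‖ := norm_add_le _ _
          _ ≤ _ := by
              gcongr
              exact norm_sub_le _ _
      rw [ht2, hlam2] at h1
      nlinarith
    have hDlb : t ^ 2 / 2 ≤ ‖D‖ := by
      have h1 : ‖((v ^ (2 * α) : ℝ) : ℂ)‖ ≤ ‖D‖ +
          (‖2 * lam * ((t : ℝ) : ℂ) * (Real.cos (α * π) : ℝ)‖ + ‖lam ^ 2‖) := by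
        have : ((v ^ (2 * α) : ℝ) : ℂ) =
            D + (2 * lam * ((t : ℝ) : ℂ) * (Real.cos (α * π) : ℝ) - lam ^ 2) := by
          rw [hDdef]; ring
        rw [this]
        calc ‖D + (2 * lam * ((t : ℝ) : ℂ) * (Real.cos (α * π) : ℝ) - lam ^ 2)‖
            ≤ ‖D‖ + ‖2 * lam * ((t : ℝ) : ℂ) * (Real.cos (α * π) : ℝ) - lam ^ 2‖ :=
              norm_add_le _ _
          _ ≤ _ := by gcongr; exact norm_sub_le _ _
      rw [ht2, hlam2] at h1
      nlinarith
    have hD0 : 0 < ‖D‖ := lt_of_lt_of_le (by positivity) hDlb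
    have hnum : ‖((s : ℝ) / (π : ℂ)) * ((t : ℝ) : ℂ)‖ = s / π * t := by
      rw [norm_mul, norm_div, Complex.norm_real, Complex.norm_real, Complex.norm_real]
      rw [Real.norm_eq_abs, Real.norm_eq_abs, Real.norm_eq_abs,
        abs_of_pos hs, abs_of_pos hπ, abs_of_pos ht0]
    have hlhs : ‖(s / (2 * π)) * v ^ (-α)‖ = s / (2 * π) * t⁻¹ := by
      rw [Real.norm_eq_abs, abs_of_pos (by positivity), Real.rpow_neg hv0.le, htdef]
    rw [hlhs, norm_div, hnum, le_div_iff₀ hD0]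
    calc s / (2 * π) * t⁻¹ * ‖D‖ ≤ s / (2 * π) * t⁻¹ * (2 * t ^ 2) := by gcongr
      _ = s / π * t := by field_simp
  -- comparison
  have h2 : IntegrableOn (fun v : ℝ => (s / (2 * π)) * v ^ (-α)) (Set.Ioi R) := by
    apply Integrable.mono (h.mono_set (Set.Ioi_subset_Ioi hR0.le))
    · refine (ContinuousOn.aestronglyMeasurable ?_ measurableSet_Ioi)
      have : ContinuousOn (fun v : ℝ => v ^ (-α)) (Set.Ioi R) :=
        ContinuousOn.rpow_const continuousOn_id fun x hx => Or.inl (ne_of_gt (lt_trans hR0 hx))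
      exact continuousOn_const.mul this
    · exact (ae_restrict_iff' measurableSet_Ioi).2 (ae_of_all _ key)
  have h3 : IntegrableOn (fun v : ℝ => v ^ (-α)) (Set.Ioi R) := by
    have h4 := h2.const_mul ((s / (2 * π))⁻¹)
    have : (fun v : ℝ => (s / (2 * π))⁻¹ * ((s / (2 * π)) * v ^ (-α)))
        = fun v : ℝ => v ^ (-α) := by
      funext v; field_simp
    rwa [this] at h4
  rw [integrableOn_Ioi_rpow_iff hR0] at h3
  linarith
end

section
/- Let α ∈ (0,1) and β ∈ (1, 1+α) be real, and let λ be a nonzero complex number with arg(λ) ∈ (-πα, πα). Then ∫₀^∞ v^{2α-β} / (v^{2α} - 2λ v^α cos(απ) + λ²) dv = π λ^{(1-β)/α} sin(π(β - α + (1-β)/α)) / (α sin(πα) sin(π(β-1)/α)). -/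
/-!
For `0 < t < 1` the integral `F w = ∫₀^∞ x^(t-1) / (x + w) dx` is holomorphic in `w` on the slit
plane. For `w = r > 0` the substitution `x = r y` and the Beta integral `B(t, 1 - t) = π / sin(πt)`
give `F r = π r^(t-1) / sin(πt)`, so by the identity theorem `F w = π w^(t-1) / sin(πt)` on the
whole slit plane. Substituting `u = v^α`, the denominator factors as `(u + w₁)(u + w₂)` with
`w₁,₂ = λ e^(±i(απ - π))`, which lie in the slit plane because `|arg λ| < πα`; partial fractions
reduce the integral to `F w₁` and `F w₂`, and the rotations `e^(±i(απ - π))` produce the sines.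
-/

open Real Set Filter MeasureTheory Topology
open Complex (I slitPlane)

lemma integrableOn_rpow_div_one_add_pow {s : ℝ} {n : ℕ} (hs : -1 < s) (hsn : s + 1 < n) :
    IntegrableOn (fun x : ℝ => x ^ s / (1 + x) ^ n) (Ioi 0) := by
  have hmeas {μ : Measure ℝ} : AEStronglyMeasurable (fun x : ℝ => x ^ s / (1 + x) ^ n) μ :=
    (by fun_prop : Measurable fun x : ℝ => x ^ s / (1 + x) ^ n).aestronglyMeasurable
  rw [← Ioc_union_Ioi_eq_Ioi zero_le_one]
  refine IntegrableOn.union ?_ ?_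
  · refine Integrable.mono' (intervalIntegral.intervalIntegrable_rpow' hs).1 hmeas ?_
    filter_upwards [ae_restrict_mem measurableSet_Ioc] with x hx
    have hx0 : 0 < x := hx.1
    rw [norm_of_nonneg (by positivity)]
    exact div_le_self (by positivity) (one_le_pow₀ (by linarith))
  · refine Integrable.mono' (integrableOn_Ioi_rpow_of_lt (by linarith : s - n < -1) one_pos)
      hmeas ?_
    filter_upwards [ae_restrict_mem measurableSet_Ioi] with x (hx : 1 < x)
    have hx0 : 0 < x := by linarith
    rw [norm_of_nonneg (by positivity), rpow_sub hx0, rpow_natCast]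
    gcongr
    linarith

section
variable {s c : ℝ} {w : ℂ}

lemma norm_rpow_div_add_pow_le (hc : 0 < c)
    (hw : ∀ x : ℝ, 0 ≤ x → c * (1 + x) ≤ ‖(x : ℂ) + w‖) (n : ℕ) {x : ℝ} (hx : 0 ≤ x) :
    ‖((x ^ s : ℝ) : ℂ) / (x + w) ^ n‖ ≤ (c ^ n)⁻¹ * (x ^ s / (1 + x) ^ n) := by
  rw [norm_div, norm_pow, Complex.norm_real, norm_of_nonneg (rpow_nonneg hx s), ← div_eq_inv_mul,
    div_div, ← mul_pow]
  gcongr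
  linarith [hw x hx]

lemma integrableOn_rpow_div_add_pow {n : ℕ} (hs : -1 < s) (hsn : s + 1 < n) (hc : 0 < c)
    (hw : ∀ x : ℝ, 0 ≤ x → c * (1 + x) ≤ ‖(x : ℂ) + w‖) :
    IntegrableOn (fun x : ℝ => ((x ^ s : ℝ) : ℂ) / (x + w) ^ n) (Ioi 0) := by
  refine Integrable.mono' ((integrableOn_rpow_div_one_add_pow hs hsn).const_mul (c ^ n)⁻¹)
    (by fun_prop : Measurable _).aestronglyMeasurable ?_
  filter_upwards [ae_restrict_mem measurableSet_Ioi] with x (hx : 0 < x)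
  exact norm_rpow_div_add_pow_le hc hw n hx.le

end

lemma exists_forall_mul_one_add_le_norm_add {w₀ : ℂ} (hw₀ : w₀ ∈ slitPlane) :
    ∃ c > 0, ∀ᶠ w in 𝓝 w₀, ∀ x : ℝ, 0 ≤ x → c * (1 + x) ≤ ‖(x : ℂ) + w‖ := by
  obtain ⟨δ, hδ, hball⟩ := Metric.isOpen_iff.1 Complex.isOpen_slitPlane w₀ hw₀
  set M := ‖w₀‖ + δ
  refine ⟨δ / 2 / (1 + M + δ / 2), by positivity, ?_⟩
  filter_upwards [Metric.ball_mem_nhds w₀ (half_pos hδ)] with w hw x hx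
  have hw' : ‖w‖ ≤ M := by
    have := norm_le_norm_add_norm_sub' w w₀
    have := hw.out
    rw [dist_eq_norm] at this
    linarith
  have hfar : δ / 2 ≤ ‖(x : ℂ) + w‖ := by
    by_contra! h
    have hmem : (-x : ℂ) ∈ slitPlane := hball (by
      rw [Metric.mem_ball, dist_eq_norm, show (-x : ℂ) - w₀ = -((x + w) - (w - w₀)) by ring,
        norm_neg]
      calc _ ≤ ‖(x : ℂ) + w‖ + ‖w - w₀‖ := norm_sub_le _ _
        _ < δ / 2 + δ / 2 := add_lt_add h (by rw [← dist_eq_norm]; exact hw)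
        _ = δ := add_halves δ)
    rw [← Complex.ofReal_neg, Complex.ofReal_mem_slitPlane] at hmem
    linarith
  have hlarge : x - M ≤ ‖(x : ℂ) + w‖ := by
    have := norm_sub_norm_le (x : ℂ) (-w)
    rw [sub_neg_eq_add, norm_neg, Complex.norm_of_nonneg hx] at this
    linarith
  rw [div_mul_eq_mul_div, div_le_iff₀ (by positivity)]
  nlinarith [mul_le_mul_of_nonneg_left hlarge (half_pos hδ).le,
    mul_le_mul_of_nonneg_left hfar (by positivity : 0 ≤ 1 + M)]

lemma integrableOn_rpow_sub_one_div_add {t : ℝ} (ht0 : 0 < t) (ht1 : t < 1) {w : ℂ}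
    (hw : w ∈ slitPlane) :
    IntegrableOn (fun x : ℝ => ((x ^ (t - 1) : ℝ) : ℂ) / (x + w)) (Ioi 0) := by
  obtain ⟨c, hc, hev⟩ := exists_forall_mul_one_add_le_norm_add hw
  simpa using integrableOn_rpow_div_add_pow (n := 1) (by linarith) (by simpa) hc hev.self_of_nhds

lemma differentiableOn_integral_rpow_div_add {t : ℝ} (ht0 : 0 < t) (ht1 : t < 1) :
    DifferentiableOn ℂ (fun w : ℂ => ∫ x in Ioi (0 : ℝ), ((x ^ (t - 1) : ℝ) : ℂ) / (x + w))
      slitPlane := by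
  intro w₀ hw₀
  obtain ⟨c, hc, hev⟩ := exists_forall_mul_one_add_le_norm_add hw₀
  obtain ⟨ε, hε, hball⟩ := Metric.mem_nhds_iff.1 hev
  have hne : ∀ w ∈ Metric.ball w₀ ε, ∀ x : ℝ, 0 < x → (x : ℂ) + w ≠ 0 := fun w hw x hx h => by
    have := hball hw x hx.le
    rw [h, norm_zero] at this
    nlinarith
  have key := hasDerivAt_integral_of_dominated_loc_of_deriv_le (μ := volume.restrict (Ioi 0))
    (F := fun (w : ℂ) (x : ℝ) => ((x ^ (t - 1) : ℝ) : ℂ) / (x + w))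
    (F' := fun (w : ℂ) (x : ℝ) => -(((x ^ (t - 1) : ℝ) : ℂ) / (x + w) ^ 2))
    (bound := fun x => (c ^ 2)⁻¹ * (x ^ (t - 1) / (1 + x) ^ 2))
    (Metric.ball_mem_nhds w₀ hε)
    (Eventually.of_forall fun w => (by fun_prop : Measurable _).aestronglyMeasurable)
    (integrableOn_rpow_sub_one_div_add ht0 ht1 hw₀)
    (by fun_prop : Measurable _).aestronglyMeasurable ?_
    ((integrableOn_rpow_div_one_add_pow (by linarith) (by push_cast; linarith)).const_mul _) ?_
  · exact key.2.differentiableAt.differentiableWithinAt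
  · filter_upwards [ae_restrict_mem measurableSet_Ioi] with x (hx : 0 < x) w hw
    rw [norm_neg]
    exact norm_rpow_div_add_pow_le hc (hball hw) 2 hx.le
  · filter_upwards [ae_restrict_mem measurableSet_Ioi] with x (hx : 0 < x) w hw
    refine ((hasDerivAt_const w _).div ((hasDerivAt_id w).const_add (x : ℂ)) (hne w hw x hx))
      |>.congr_deriv ?_
    simp [neg_div]

lemma betaIntegral_self_one_sub {t : ℝ} (ht0 : 0 < t) (ht1 : t < 1) :
    Complex.betaIntegral t (1 - t) = π / Complex.sin (π * t) := by
  have h := Complex.Gamma_mul_Gamma_eq_betaIntegral (s := t) (t := 1 - t)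
    (by simpa using ht0) (by simpa using ht1)
  rwa [add_sub_cancel, Complex.Gamma_one, one_mul, Complex.Gamma_mul_Gamma_one_sub, eq_comm] at h

lemma image_div_one_sub_Ioo : (fun x : ℝ => x / (1 - x)) '' Ioo 0 1 = Ioi 0 := by
  ext y
  constructor
  · rintro ⟨x, ⟨hx0, hx1⟩, rfl⟩
    exact div_pos hx0 (sub_pos.2 hx1)
  · intro (hy : 0 < y)
    refine ⟨y / (1 + y), ⟨by positivity, (div_lt_one (by positivity)).2 (by linarith)⟩, ?_⟩
    field_simp
    ring

lemma integral_rpow_div_add_one {t : ℝ} (ht0 : 0 < t) (ht1 : t < 1) :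
    ∫ x in Ioi (0 : ℝ), ((x ^ (t - 1) : ℝ) : ℂ) / (x + 1) = π / Complex.sin (π * t) := by
  have hderiv : ∀ x ∈ Ioo (0 : ℝ) 1,
      HasDerivWithinAt (fun x : ℝ => x / (1 - x)) (((1 - x) ^ 2)⁻¹) (Ioo 0 1) x := by
    intro x hx
    have hx1 : 1 - x ≠ 0 := (sub_pos.2 hx.2).ne'
    refine (((hasDerivAt_id' x).div ((hasDerivAt_id' x).const_sub 1) hx1).congr_deriv
      ?_).hasDerivWithinAt
    field_simp
    ring
  have hinj : InjOn (fun x : ℝ => x / (1 - x)) (Ioo 0 1) := by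
    intro x hx y hy h
    have := (sub_pos.2 hx.2).ne'
    have := (sub_pos.2 hy.2).ne'
    field_simp at h
    linarith
  rw [← image_div_one_sub_Ioo,
    integral_image_eq_integral_abs_deriv_smul measurableSet_Ioo hderiv hinj,
    ← betaIntegral_self_one_sub ht0 ht1, Complex.betaIntegral,
    intervalIntegral.integral_of_le zero_le_one, integral_Ioc_eq_integral_Ioo]
  refine setIntegral_congr_fun measurableSet_Ioo fun x ⟨hx0, hx1⟩ => ?_
  have h1x : 0 < 1 - x := sub_pos.2 hx1
  rw [abs_of_pos (by positivity), Real.div_rpow hx0.le h1x.le, Complex.real_smul,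
    Complex.ofReal_div, Complex.ofReal_cpow hx0.le, Complex.ofReal_cpow h1x.le]
  have h1xC : (1 - x : ℂ) ≠ 0 := by exact_mod_cast h1x.ne'
  push_cast
  rw [show (1 : ℂ) - t - 1 = -((t - 1 : ℂ) + 1) by ring, Complex.cpow_neg,
    Complex.cpow_add _ _ h1xC, Complex.cpow_one]
  field_simp
  ring

lemma integral_rpow_div_add_ofReal {t r : ℝ} (ht0 : 0 < t) (ht1 : t < 1) (hr : 0 < r) :
    ∫ x in Ioi (0 : ℝ), ((x ^ (t - 1) : ℝ) : ℂ) / (x + r) =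
      π / Complex.sin (π * t) * (r : ℂ) ^ ((t : ℂ) - 1) := by
  have hrC : (r : ℂ) ≠ 0 := by exact_mod_cast hr.ne'
  have hscale : ∀ x ∈ Ioi (0 : ℝ), (((r * x) ^ (t - 1) : ℝ) : ℂ) / ((r * x : ℝ) + r) =
      (r : ℂ) ^ ((t : ℂ) - 1) / r * (((x ^ (t - 1) : ℝ) : ℂ) / (x + 1)) := by
    intro x (hx : 0 < x)
    rw [mul_rpow hr.le hx.le, Complex.ofReal_mul, Complex.ofReal_cpow hr.le]
    push_cast
    field_simp
  have h := integral_comp_mul_left_Ioi (fun x : ℝ => ((x ^ (t - 1) : ℝ) : ℂ) / (x + r)) 0 hr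
  rw [mul_zero, setIntegral_congr_fun measurableSet_Ioi hscale, integral_const_mul,
    integral_rpow_div_add_one ht0 ht1, eq_inv_smul_iff₀ hr.ne', Complex.real_smul] at h
  rw [← h]
  field_simp

lemma integral_rpow_div_add {t : ℝ} (ht0 : 0 < t) (ht1 : t < 1) {w : ℂ} (hw : w ∈ slitPlane) :
    ∫ x in Ioi (0 : ℝ), ((x ^ (t - 1) : ℝ) : ℂ) / (x + w) =
      π / Complex.sin (π * t) * w ^ ((t : ℂ) - 1) := by
  have hF := (differentiableOn_integral_rpow_div_add ht0 ht1).analyticOnNhd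
    Complex.isOpen_slitPlane
  have hG : AnalyticOnNhd ℂ (fun w : ℂ => π / Complex.sin (π * t) * w ^ ((t : ℂ) - 1))
      slitPlane := DifferentiableOn.analyticOnNhd (fun w hw =>
    ((differentiableAt_id.cpow_const hw).const_mul _).differentiableWithinAt)
      Complex.isOpen_slitPlane
  have hconn : IsPreconnected slitPlane :=
    (Complex.starConvex_one_slitPlane.isPathConnected
      Complex.one_mem_slitPlane).isConnected.isPreconnected
  have hreal : ∃ᶠ r : ℝ in 𝓝[≠] 1, (∫ x in Ioi (0 : ℝ), ((x ^ (t - 1) : ℝ) : ℂ) / (x + (r : ℂ))) =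
      π / Complex.sin (π * t) * (r : ℂ) ^ ((t : ℂ) - 1) :=
    (eventually_nhdsWithin_of_eventually_nhds (Ioi_mem_nhds one_pos)).mono
      (fun r hr => integral_rpow_div_add_ofReal ht0 ht1 hr) |>.frequently
  have hofReal : Tendsto (fun r : ℝ => (r : ℂ)) (𝓝[≠] 1) (𝓝[≠] 1) :=
    tendsto_nhdsWithin_iff.2 ⟨(Complex.continuous_ofReal.tendsto' 1 1 (by simp)).mono_left
      nhdsWithin_le_nhds, eventually_nhdsWithin_of_forall fun r hr => by simpa using hr⟩
  exact hF.eqOn_of_preconnected_of_frequently_eq hG hconn Complex.one_mem_slitPlane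
    (hofReal.frequently hreal) hw

lemma ofReal_add_ne_zero_of_mem_slitPlane {w : ℂ} (hw : w ∈ slitPlane) {x : ℝ} (hx : 0 ≤ x) :
    (x : ℂ) + w ≠ 0 := fun h => by
  rw [show w = ((-x : ℝ) : ℂ) by push_cast; linear_combination h,
    Complex.ofReal_mem_slitPlane] at hw
  linarith

lemma sub_mul_integral_rpow_div_add_mul_add {t : ℝ} (ht0 : 0 < t) (ht1 : t < 1)
    {w₁ w₂ : ℂ} (hw₁ : w₁ ∈ slitPlane) (hw₂ : w₂ ∈ slitPlane) :
    (w₁ - w₂) * ∫ u in Ioi (0 : ℝ), ((u ^ t : ℝ) : ℂ) / ((u + w₁) * (u + w₂)) =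
      π / Complex.sin (π * t) * (w₁ ^ (t : ℂ) - w₂ ^ (t : ℂ)) := by
  have hpf : ∀ u ∈ Ioi (0 : ℝ), (w₁ - w₂) * (((u ^ t : ℝ) : ℂ) / ((u + w₁) * (u + w₂))) =
      w₁ * (((u ^ (t - 1) : ℝ) : ℂ) / (u + w₁)) - w₂ * (((u ^ (t - 1) : ℝ) : ℂ) / (u + w₂)) := by
    intro u (hu : 0 < u)
    have h₁ := ofReal_add_ne_zero_of_mem_slitPlane hw₁ hu.le
    have h₂ := ofReal_add_ne_zero_of_mem_slitPlane hw₂ hu.le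
    have hu' : (u : ℂ) ≠ 0 := by exact_mod_cast hu.ne'
    rw [rpow_sub_one hu.ne', Complex.ofReal_div]
    field_simp
    ring
  have hpow : ∀ w ∈ slitPlane, w * w ^ ((t : ℂ) - 1) = w ^ (t : ℂ) := fun w hw => by
    rw [Complex.cpow_sub _ _ (Complex.slitPlane_ne_zero hw), Complex.cpow_one,
      mul_div_cancel₀ _ (Complex.slitPlane_ne_zero hw)]
  rw [← integral_const_mul, setIntegral_congr_fun measurableSet_Ioi hpf,
    integral_sub ((integrableOn_rpow_sub_one_div_add ht0 ht1 hw₁).const_mul _)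
      ((integrableOn_rpow_sub_one_div_add ht0 ht1 hw₂).const_mul _),
    integral_const_mul, integral_const_mul, integral_rpow_div_add ht0 ht1 hw₁,
    integral_rpow_div_add ht0 ht1 hw₂, ← hpow w₁ hw₁, ← hpow w₂ hw₂]
  ring

lemma sq_sub_two_mul_mul_cos_add_sq (u lam : ℂ) (θ : ℝ) :
    u ^ 2 - 2 * lam * u * (Real.cos θ : ℂ) + lam ^ 2 =
      (u + lam * Complex.exp ((θ - π : ℝ) * I)) * (u + lam * Complex.exp ((-(θ - π) : ℝ) * I)) := by
  have h₁ : Complex.exp ((θ - π : ℝ) * I) = -Complex.exp (θ * I) := by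
    rw [Complex.ofReal_sub, sub_mul, Complex.exp_sub, Complex.exp_pi_mul_I, div_neg, div_one]
  have h₂ : Complex.exp ((-(θ - π) : ℝ) * I) = -Complex.exp (-θ * I) := by
    rw [show ((-(θ - π) : ℝ) : ℂ) * I = -θ * I + π * I by push_cast; ring, Complex.exp_add,
      Complex.exp_pi_mul_I, mul_neg_one]
  have h₃ : Complex.exp (θ * I) * Complex.exp (-θ * I) = 1 := by
    rw [← Complex.exp_add]; simp
  rw [h₁, h₂, Complex.ofReal_cos, Complex.cos]
  linear_combination (-lam ^ 2) * h₃

lemma integral_comp_rpow_div_quadratic {α : ℝ} (hα : 0 < α) (t θ : ℝ) (lam : ℂ) :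
    ∫ v in Ioi (0 : ℝ), ((v ^ (α * t + α - 1) : ℝ) : ℂ) /
        (((v ^ (2 * α) : ℝ) : ℂ) - 2 * lam * ((v ^ α : ℝ) : ℂ) * (Real.cos θ : ℂ) + lam ^ 2) =
      (α : ℂ)⁻¹ * ∫ u in Ioi (0 : ℝ), ((u ^ t : ℝ) : ℂ) /
        ((u + lam * Complex.exp ((θ - π : ℝ) * I)) *
          (u + lam * Complex.exp ((-(θ - π) : ℝ) * I))) := by
  conv_rhs => rw [← integral_comp_rpow_Ioi _ hα.ne', ← integral_const_mul]
  refine setIntegral_congr_fun measurableSet_Ioi fun v (hv : 0 < v) => ?_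
  have hα' : (α : ℂ) ≠ 0 := by exact_mod_cast hα.ne'
  have hnum : v ^ (α * t + α - 1) = v ^ (α - 1) * (v ^ α) ^ t := by
    rw [← rpow_mul hv.le, ← rpow_add hv]
    ring_nf
  have hden : v ^ (2 * α) = (v ^ α) ^ 2 := by
    rw [← rpow_natCast, ← rpow_mul hv.le]
    ring_nf
  rw [← sq_sub_two_mul_mul_cos_add_sq, abs_of_pos hα, Complex.real_smul, hnum, hden]
  push_cast
  field_simp

lemma exp_mul_I_sub_exp_neg_mul_I (z : ℂ) :
    Complex.exp (z * I) - Complex.exp (-z * I) = 2 * I * Complex.sin z := by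
  rw [Complex.sin]
  ring_nf
  rw [Complex.I_sq]
  ring

section Rotation
variable {lam : ℂ} {φ : ℝ}

lemma log_mul_exp_mul_I (hlam : lam ≠ 0) (hφ : lam.arg + φ ∈ Ioo (-π) π) :
    Complex.log (lam * Complex.exp (φ * I)) = Complex.log lam + φ * I := by
  rw [show lam * Complex.exp (φ * I) = Complex.exp (Complex.log lam + φ * I) by
    rw [Complex.exp_add, Complex.exp_log hlam]]
  exact Complex.log_exp (by simpa [Complex.log_im] using hφ.1)
    (by simpa [Complex.log_im] using hφ.2.le)

lemma mul_exp_mul_I_mem_slitPlane (hlam : lam ≠ 0) (hφ : lam.arg + φ ∈ Ioo (-π) π) :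
    lam * Complex.exp (φ * I) ∈ slitPlane := by
  have h := congrArg Complex.im (log_mul_exp_mul_I hlam hφ)
  rw [Complex.log_im] at h
  refine Complex.mem_slitPlane_iff_arg.2 ⟨?_, mul_ne_zero hlam (Complex.exp_ne_zero _)⟩
  simp only [h, Complex.add_im, Complex.log_im, Complex.mul_im, Complex.ofReal_re,
    Complex.I_im, Complex.ofReal_im, Complex.I_re]
  linarith [hφ.2]

lemma mul_exp_mul_I_cpow (hlam : lam ≠ 0) (hφ : lam.arg + φ ∈ Ioo (-π) π) (s : ℂ) :
    (lam * Complex.exp (φ * I)) ^ s = lam ^ s * Complex.exp (s * φ * I) := by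
  rw [Complex.cpow_def_of_ne_zero (mul_ne_zero hlam (Complex.exp_ne_zero _)),
    log_mul_exp_mul_I hlam hφ, Complex.cpow_def_of_ne_zero hlam, ← Complex.exp_add]
  ring_nf

lemma mul_exp_cpow_sub_mul_exp_neg_cpow (hlam : lam ≠ 0) (hφ : lam.arg + φ ∈ Ioo (-π) π)
    (hφ' : lam.arg + -φ ∈ Ioo (-π) π) (s : ℂ) :
    (lam * Complex.exp (φ * I)) ^ s - (lam * Complex.exp ((-φ : ℝ) * I)) ^ s =
      2 * I * lam ^ s * Complex.sin (s * φ) := by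
  rw [mul_exp_mul_I_cpow hlam hφ, mul_exp_mul_I_cpow hlam hφ', ← mul_sub, Complex.ofReal_neg,
    mul_neg, neg_mul, ← neg_mul, exp_mul_I_sub_exp_neg_mul_I]
  ring

end Rotation

lemma integral_rpow_div_quadratic {α t θ : ℝ} (hα : 0 < α) (ht0 : 0 < t) (ht1 : t < 1)
    (hθ : θ ∈ Ioo 0 π) {lam : ℂ} (hlam : lam ≠ 0) (harg : lam.arg ∈ Ioo (-θ) θ) :
    ∫ v in Ioi (0 : ℝ), ((v ^ (α * t + α - 1) : ℝ) : ℂ) /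
        (((v ^ (2 * α) : ℝ) : ℂ) - 2 * lam * ((v ^ α : ℝ) : ℂ) * (Real.cos θ : ℂ) + lam ^ 2) =
      π * lam ^ ((t : ℂ) - 1) * (Real.sin (t * (π - θ)) : ℂ) /
        (α * (Real.sin (π * t) : ℂ) * (Real.sin θ : ℂ)) := by
  have harg₁ : lam.arg + (θ - π) ∈ Ioo (-π) π := by
    constructor <;> linarith [harg.1, harg.2, hθ.2]
  have harg₂ : lam.arg + -(θ - π) ∈ Ioo (-π) π := by
    constructor <;> linarith [harg.1, harg.2, hθ.2]
  have hsinθ : (Real.sin θ : ℂ) ≠ 0 := by exact_mod_cast (sin_pos_of_pos_of_lt_pi hθ.1 hθ.2).ne'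
  have key := sub_mul_integral_rpow_div_add_mul_add ht0 ht1
    (mul_exp_mul_I_mem_slitPlane hlam harg₁) (mul_exp_mul_I_mem_slitPlane hlam harg₂)
  have hdiff := mul_exp_cpow_sub_mul_exp_neg_cpow hlam harg₁ harg₂ 1
  simp only [Complex.cpow_one, one_mul] at hdiff
  rw [hdiff, mul_exp_cpow_sub_mul_exp_neg_cpow hlam harg₁ harg₂, ← Complex.ofReal_mul,
    ← Complex.ofReal_mul, ← Complex.ofReal_sin, ← Complex.ofReal_sin, ← Complex.ofReal_sin,
    sin_sub_pi, show t * (θ - π) = -(t * (π - θ)) by ring, sin_neg,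
    Complex.ofReal_neg (Real.sin θ), Complex.ofReal_neg (Real.sin (t * (π - θ)))] at key
  have hne : 2 * I * lam * -(Real.sin θ : ℂ) ≠ 0 :=
    mul_ne_zero (mul_ne_zero (mul_ne_zero two_ne_zero Complex.I_ne_zero) hlam) (neg_ne_zero.2 hsinθ)
  rw [integral_comp_rpow_div_quadratic hα, ← mul_right_inj' hne, mul_left_comm, key,
    Complex.cpow_sub _ _ hlam, Complex.cpow_one]
  field_simp

theorem stmt_7 (α β : ℝ) (hα : α ∈ Set.Ioo (0 : ℝ) 1) (hβ : β ∈ Set.Ioo (1 : ℝ) (1 + α))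
    (lam : ℂ) (hlam : lam ≠ 0) (harg : lam.arg ∈ Set.Ioo (-(π * α)) (π * α)) :
    (∫ v in Set.Ioi (0 : ℝ),
        ((v ^ (2 * α - β) : ℝ) : ℂ) /
          (((v ^ (2 * α) : ℝ) : ℂ) - 2 * lam * ((v ^ α : ℝ) : ℂ) * (Real.cos (α * π) : ℝ) +
            lam ^ 2)) =
      (π : ℂ) * lam ^ (((1 - β) / α : ℝ) : ℂ) *
          (Real.sin (π * (β - α + (1 - β) / α)) : ℝ) /
        ((α : ℂ) * (Real.sin (π * α) : ℝ) * (Real.sin (π * (β - 1) / α) : ℝ)) := by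
  obtain ⟨hα0, hα1⟩ := hα
  obtain ⟨hβ1, hβα⟩ := hβ
  set γ := (1 - β) / α with hγ
  have hαγ : α * γ = 1 - β := by rw [hγ]; field_simp
  have ht0 : 0 < 1 + γ := by nlinarith
  have ht1 : 1 + γ < 1 := by nlinarith
  have hθ : α * π ∈ Ioo 0 π := ⟨by positivity, by nlinarith [pi_pos]⟩
  rw [show 2 * α - β = α * (1 + γ) + α - 1 by linarith,
    integral_rpow_div_quadratic hα0 ht0 ht1 hθ hlam (by rwa [mul_comm α])]
  have hsin : Real.sin (π * (1 + γ)) = Real.sin (π * (β - 1) / α) := by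
    rw [← sin_pi_sub]
    congr 1
    rw [eq_div_iff hα0.ne']
    linear_combination (-π) * hαγ
  rw [hsin, mul_comm α π, show (1 + γ) * (π - π * α) = π * (β - α + γ) by
    linear_combination (-π) * hαγ]
  push_cast
  ring_nf
end

section
/- Let α ∈ (0,1) and let λ be a nonzero complex number with arg(λ) ∈ (-πα, πα). Define J_λ(t) = ∫₀^∞ e^{-u t} u^{α-1} / (u^{2α} - 2λ u^α cos(πα) + λ²) du for t ≥ 0. Then J_λ is well defined (the integral converges for every t ≥ 0), J_λ is continuous on [0, ∞), and J_λ(t) → 0 as t → ∞. -/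
open Real Set Filter MeasureTheory

/-! In `x = u ^ α` the denominator `D u` factors as `(x - λ e^{iπα}) (x - λ e^{-iπα})`. The
condition on `arg λ` keeps both roots off the ray `[0, ∞)`, so `D` has no zero on `[0, ∞)`, and
`|D u| ≥ u ^ (2α) / 4` for large `u`. Hence `f u = u ^ (α - 1) / D u` is integrable on `(0, ∞)`:
it is `O(u ^ (α - 1))` at `0` and `O(u ^ (-α - 1))` at `∞`. So `J_λ` is the Laplace transform of an
integrable function, and as `|e^{-ut}| ≤ 1` for `u, t ≥ 0`, domination by `|f|` gives
integrability, continuity on `[0, ∞)` and, by dominated convergence, decay at `∞`. -/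

section Laplace

variable {f : ℝ → ℂ}

lemma norm_cexp_neg_mul_mul_le {u t : ℝ} (hu : 0 ≤ u) (ht : 0 ≤ t) (z : ℂ) :
    ‖Complex.exp (-(u * t : ℝ)) * z‖ ≤ ‖z‖ := by
  rw [norm_mul, ← Complex.ofReal_neg, Complex.norm_exp_ofReal]
  exact mul_le_of_le_one_left (norm_nonneg z) (Real.exp_le_one_iff.2 (by nlinarith))

lemma ae_norm_cexp_neg_mul_mul_le {t : ℝ} (ht : 0 ≤ t) :
    ∀ᵐ u ∂volume.restrict (Ioi 0), ‖Complex.exp (-(u * t : ℝ)) * f u‖ ≤ ‖f u‖ :=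
  (ae_restrict_iff' measurableSet_Ioi).2 <|
    ae_of_all _ fun _ hu => norm_cexp_neg_mul_mul_le (le_of_lt hu) ht _

lemma aestronglyMeasurable_cexp_neg_mul_mul (hf : IntegrableOn f (Ioi 0)) (t : ℝ) :
    AEStronglyMeasurable (fun u : ℝ => Complex.exp (-(u * t : ℝ)) * f u)
      (volume.restrict (Ioi 0)) :=
  (by fun_prop : Continuous fun u : ℝ => Complex.exp (-(u * t : ℝ))).aestronglyMeasurable.mul
    hf.aestronglyMeasurable

theorem integrableOn_cexp_neg_mul_mul (hf : IntegrableOn f (Ioi 0)) {t : ℝ} (ht : 0 ≤ t) :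
    IntegrableOn (fun u : ℝ => Complex.exp (-(u * t : ℝ)) * f u) (Ioi 0) :=
  hf.norm.mono' (aestronglyMeasurable_cexp_neg_mul_mul hf t) (ae_norm_cexp_neg_mul_mul_le ht)

theorem continuousOn_integral_cexp_neg_mul_mul (hf : IntegrableOn f (Ioi 0)) :
    ContinuousOn (fun t : ℝ => ∫ u in Ioi 0, Complex.exp (-(u * t : ℝ)) * f u) (Ici 0) :=
  fun _ _ => continuousWithinAt_of_dominated
    (Eventually.of_forall (aestronglyMeasurable_cexp_neg_mul_mul hf))
    (eventually_nhdsWithin_of_forall fun _ ht => ae_norm_cexp_neg_mul_mul_le ht) hf.norm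
    (ae_of_all _ fun _ => by fun_prop)

theorem tendsto_integral_cexp_neg_mul_mul_atTop (hf : IntegrableOn f (Ioi 0)) :
    Tendsto (fun t : ℝ => ∫ u in Ioi 0, Complex.exp (-(u * t : ℝ)) * f u) atTop (nhds 0) := by
  have hlim : ∀ᵐ u ∂volume.restrict (Ioi 0),
      Tendsto (fun t : ℝ => Complex.exp (-(u * t : ℝ)) * f u) atTop (nhds 0) := by
    refine (ae_restrict_iff' measurableSet_Ioi).2 (ae_of_all _ fun u (hu : 0 < u) => ?_)
    have hexp : Tendsto (fun t : ℝ => Complex.exp (-(u * t : ℝ))) atTop (nhds 0) := by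
      simpa [Complex.tendsto_exp_nhds_zero_iff] using tendsto_id.const_mul_atTop hu
    simpa using hexp.mul_const (f u)
  simpa using tendsto_integral_filter_of_dominated_convergence _
    (Eventually.of_forall (aestronglyMeasurable_cexp_neg_mul_mul hf))
    (eventually_ge_atTop 0 |>.mono fun _ ht => ae_norm_cexp_neg_mul_mul_le ht) hf.norm hlim

end Laplace

section Quadratic

variable {z : ℂ} {β x : ℝ}

lemma sq_sub_two_mul_mul_cos_add_sq_s11 (w : ℂ) :
    w ^ 2 - 2 * z * w * (Real.cos β : ℂ) + z ^ 2 =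
      (w - z * Complex.exp (β * Complex.I)) * (w - z * Complex.exp (-β * Complex.I)) := by
  have hprod : Complex.exp (β * Complex.I) * Complex.exp (-β * Complex.I) = 1 := by
    rw [← Complex.exp_add]; simp
  rw [Complex.ofReal_cos]
  linear_combination (-z * w) * Complex.two_cos (β : ℂ) - z ^ 2 * hprod

lemma arg_eq_neg_of_mul_exp_mul_I_eq_ofReal (hx : 0 < x) (hβ : -β ∈ Ioc (-π) π)
    (h : z * Complex.exp (β * Complex.I) = x) : z.arg = -β := by
  have hz : z = x * Complex.exp (↑(-β) * Complex.I) := by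
    rw [← h, mul_assoc, ← Complex.exp_add]; simp
  rw [hz, Complex.arg_real_mul _ hx, Complex.arg_exp_mul_I, toIocMod_eq_self]
  simpa [two_mul] using hβ

lemma sq_sub_two_mul_mul_cos_add_sq_ne_zero (hx : 0 ≤ x) (hz : z ≠ 0) (hβ : β ∈ Ioo 0 π)
    (harg : z.arg ∈ Ioo (-β) β) : (x : ℂ) ^ 2 - 2 * z * x * (Real.cos β : ℂ) + z ^ 2 ≠ 0 := by
  obtain ⟨hβ0, hβπ⟩ := hβ
  rcases hx.eq_or_lt with rfl | hx
  · simpa using hz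
  rw [sq_sub_two_mul_mul_cos_add_sq_s11, mul_ne_zero_iff, sub_ne_zero, sub_ne_zero]
  constructor
  · intro h
    have := arg_eq_neg_of_mul_exp_mul_I_eq_ofReal hx ⟨by linarith, by linarith⟩ h.symm
    linarith [harg.1]
  · intro h
    rw [← Complex.ofReal_neg] at h
    have := arg_eq_neg_of_mul_exp_mul_I_eq_ofReal hx ⟨by linarith, by linarith⟩ h.symm
    linarith [harg.2]

lemma half_le_norm_ofReal_sub_mul {w : ℂ} (hw : ‖w‖ = 1) (hx : 2 * ‖z‖ ≤ x) :
    x / 2 ≤ ‖(x : ℂ) - z * w‖ := by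
  have := norm_sub_norm_le (x : ℂ) (z * w)
  rw [Complex.norm_real, norm_mul, hw, Real.norm_of_nonneg (by linarith [norm_nonneg z])]
    at this
  linarith

lemma sq_div_four_le_norm_sq_sub_two_mul_mul_cos_add_sq (hx : 2 * ‖z‖ ≤ x) :
    x ^ 2 / 4 ≤ ‖(x : ℂ) ^ 2 - 2 * z * x * (Real.cos β : ℂ) + z ^ 2‖ := by
  have hx0 : 0 ≤ x / 2 := by linarith [norm_nonneg z]
  rw [sq_sub_two_mul_mul_cos_add_sq_s11, norm_mul, ← Complex.ofReal_neg]
  calc x ^ 2 / 4 = (x / 2) * (x / 2) := by ring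
    _ ≤ _ := mul_le_mul (half_le_norm_ofReal_sub_mul (Complex.norm_exp_ofReal_mul_I _) hx)
      (half_le_norm_ofReal_sub_mul (Complex.norm_exp_ofReal_mul_I _) hx) hx0 (norm_nonneg _)

end Quadratic

lemma rpow_two_mul_eq_sq {u : ℝ} (hu : 0 ≤ u) (α : ℝ) : u ^ (2 * α) = (u ^ α) ^ 2 := by
  rw [mul_comm, Real.rpow_mul hu, Real.rpow_two]

section KernelDenom

noncomputable def kernelDenom (α : ℝ) (lam : ℂ) (u : ℝ) : ℂ :=
  ((u ^ (2 * α) : ℝ) : ℂ) - 2 * lam * ((u ^ α : ℝ) : ℂ) * (Real.cos (π * α) : ℝ) + lam ^ 2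

variable {α : ℝ} {lam : ℂ}

lemma kernelDenom_eq {u : ℝ} (hu : 0 ≤ u) :
    kernelDenom α lam u =
      ((u ^ α : ℝ) : ℂ) ^ 2 - 2 * lam * ((u ^ α : ℝ) : ℂ) * (Real.cos (π * α) : ℝ) +
        lam ^ 2 := by
  rw [kernelDenom, rpow_two_mul_eq_sq hu, Complex.ofReal_pow]

lemma continuous_kernelDenom (hα : 0 ≤ α) : Continuous (kernelDenom α lam) := by
  have := Real.continuous_rpow_const hα
  have := Real.continuous_rpow_const (by positivity : 0 ≤ 2 * α)
  unfold kernelDenom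
  fun_prop

lemma kernelDenom_ne_zero (hα : α ∈ Ioo 0 1) (hlam : lam ≠ 0)
    (harg : lam.arg ∈ Ioo (-(π * α)) (π * α)) {u : ℝ} (hu : 0 ≤ u) :
    kernelDenom α lam u ≠ 0 := by
  have hπα : π * α ∈ Ioo 0 π := ⟨by nlinarith [hα.1, pi_pos], by nlinarith [hα.2, pi_pos]⟩
  rw [kernelDenom_eq hu]
  exact sq_sub_two_mul_mul_cos_add_sq_ne_zero (by positivity) hlam hπα harg

lemma eventually_rpow_div_four_le_norm_kernelDenom (hα : 0 < α) :
    ∀ᶠ u in atTop, u ^ (2 * α) / 4 ≤ ‖kernelDenom α lam u‖ := by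
  filter_upwards [eventually_ge_atTop 0,
    (tendsto_rpow_atTop hα).eventually_ge_atTop (2 * ‖lam‖)] with u hu hlarge
  rw [kernelDenom_eq hu, rpow_two_mul_eq_sq hu]
  exact sq_div_four_le_norm_sq_sub_two_mul_mul_cos_add_sq hlarge

lemma isBigO_rpow_div_kernelDenom (hα : 0 < α) :
    (fun u : ℝ => ((u ^ (α - 1) : ℝ) : ℂ) / kernelDenom α lam u) =O[atTop]
      fun u => u ^ (-α - 1) := by
  refine Asymptotics.IsBigO.of_bound 4 ?_
  filter_upwards [eventually_gt_atTop 0, eventually_rpow_div_four_le_norm_kernelDenom hα]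
    with u hu hbound
  have hpos : 0 < u ^ (2 * α) / 4 := by positivity
  rw [norm_div, Complex.norm_real, Real.norm_of_nonneg (by positivity),
    Real.norm_of_nonneg (by positivity), div_le_iff₀ (hpos.trans_le hbound)]
  have hsplit : u ^ (α - 1) = u ^ (-α - 1) * u ^ (2 * α) := by
    rw [← Real.rpow_add hu]; ring_nf
  calc u ^ (α - 1) = 4 * u ^ (-α - 1) * (u ^ (2 * α) / 4) := by rw [hsplit]; ring
    _ ≤ 4 * u ^ (-α - 1) * ‖kernelDenom α lam u‖ := by gcongr

theorem integrableOn_rpow_div_kernelDenom (hα : α ∈ Ioo 0 1) (hlam : lam ≠ 0)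
    (harg : lam.arg ∈ Ioo (-(π * α)) (π * α)) :
    IntegrableOn (fun u : ℝ => ((u ^ (α - 1) : ℝ) : ℂ) / kernelDenom α lam u) (Ioi 0) := by
  have hinv : ContinuousOn (fun u => (kernelDenom α lam u)⁻¹) (Ici 0) :=
    (continuous_kernelDenom hα.1.le).continuousOn.inv₀ fun _ hu =>
      kernelDenom_ne_zero hα hlam harg hu
  rw [← Ioc_union_Ioi_eq_Ioi zero_le_one]
  refine IntegrableOn.union ?_ ?_
  · obtain ⟨C, hC⟩ :=
      isCompact_Icc.exists_bound_of_continuousOn (hinv.mono Icc_subset_Ici_self)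
    have hrpow : IntegrableOn (fun u : ℝ => ((u ^ (α - 1) : ℝ) : ℂ)) (Ioc 0 1) :=
      ((intervalIntegrable_iff_integrableOn_Ioc_of_le zero_le_one).1
        (intervalIntegral.intervalIntegrable_rpow' (by linarith [hα.1]))).ofReal
    simp_rw [div_eq_mul_inv]
    exact hrpow.mul_bdd ((hinv.mono fun _ hu => hu.1.le).aestronglyMeasurable measurableSet_Ioc)
      ((ae_restrict_iff' measurableSet_Ioc).2 <|
        ae_of_all _ fun u hu => hC u (Ioc_subset_Icc_self hu))
  · have hcont :
        ContinuousOn (fun u : ℝ => ((u ^ (α - 1) : ℝ) : ℂ) / kernelDenom α lam u) (Ici 1) :=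
      (Complex.continuous_ofReal.comp_continuousOn (continuousOn_id.rpow_const fun u hu =>
        Or.inl (by simp at hu ⊢; linarith))).div (continuous_kernelDenom hα.1.le).continuousOn
        fun _ hu => kernelDenom_ne_zero hα hlam harg (zero_le_one.trans hu)
    exact ((hcont.locallyIntegrableOn measurableSet_Ici).integrableOn_of_isBigO_atTop
      (isBigO_rpow_div_kernelDenom hα.1)
      (integrableAtFilter_rpow_atTop_iff.2 (by linarith [hα.1]))).mono_set Ioi_subset_Ici_self

end KernelDenom

theorem stmt_11 (α : ℝ) (hα : α ∈ Set.Ioo (0 : ℝ) 1)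
    (lam : ℂ) (hlam : lam ≠ 0) (harg : lam.arg ∈ Set.Ioo (-(π * α)) (π * α)) :
    (∀ t : ℝ, 0 ≤ t → MeasureTheory.IntegrableOn (fun u : ℝ =>
        Complex.exp (-(u * t : ℝ)) * ((u ^ (α - 1) : ℝ) : ℂ) /
          (((u ^ (2 * α) : ℝ) : ℂ) - 2 * lam * ((u ^ α : ℝ) : ℂ) * (Real.cos (π * α) : ℝ) +
            lam ^ 2))
        (Set.Ioi 0)) ∧
    ContinuousOn (fun t : ℝ => ∫ u in Set.Ioi (0 : ℝ),
        Complex.exp (-(u * t : ℝ)) * ((u ^ (α - 1) : ℝ) : ℂ) /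
          (((u ^ (2 * α) : ℝ) : ℂ) - 2 * lam * ((u ^ α : ℝ) : ℂ) * (Real.cos (π * α) : ℝ) +
            lam ^ 2))
      (Set.Ici 0) ∧
    Filter.Tendsto (fun t : ℝ => ∫ u in Set.Ioi (0 : ℝ),
        Complex.exp (-(u * t : ℝ)) * ((u ^ (α - 1) : ℝ) : ℂ) /
          (((u ^ (2 * α) : ℝ) : ℂ) - 2 * lam * ((u ^ α : ℝ) : ℂ) * (Real.cos (π * α) : ℝ) +
            lam ^ 2))
      Filter.atTop (nhds 0) := by
  have hf := integrableOn_rpow_div_kernelDenom hα hlam harg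
  simp only [mul_div_assoc]
  exact ⟨fun _ ht => integrableOn_cexp_neg_mul_mul hf ht,
    continuousOn_integral_cexp_neg_mul_mul hf, tendsto_integral_cexp_neg_mul_mul_atTop hf⟩
end

section
/- Let α ∈ (0,1) and let λ be a nonzero complex number with arg(λ) ∈ (-πα, πα). Set a_k = -(e^{iπα} sin(πα)/(π λ^k)) · (sin((k+1)πα)/sin(πα) - e^{ikπα}) for k ≥ 1. Then for every v with 0 < v < |λ|^{1/α}, the function f_{α,1}(v) = -(λ sin(πα)/π) · v^{α-1} / (v^{2α} - 2λ v^α cos(πα) + λ²) admits the convergent series expansion f_{α,1}(v) = Σ_{k=1}^∞ a_k v^{kα - 1}. -/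
/-!
Since `e^{iπα} (sin((k+1)πα) - sin(πα) e^{ikπα}) = sin(kπα)`, the coefficients are simply
`a_k = -sin(kπα) / (π λ^k)`. Splitting `sin(kθ)` into `e^{±ikθ}` turns `∑ sin(kθ) z^k` into two
geometric series, whose sum is `z sin θ / (1 - 2 z cos θ + z²)`. At `z = v^α / λ`, which has
modulus `< 1` exactly when `v < |λ|^{1/α}`, this is the claimed closed form.
-/

open Real Set Filter MeasureTheory

/-- The coefficients `a_k = -(e^{iπα} sin(πα)/(π λ^k)) (sin((k+1)πα)/sin(πα) - e^{ikπα})`. -/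
noncomputable def aCoeff (α : ℝ) (lam : ℂ) (k : ℕ) : ℂ :=
  -(Complex.exp (Complex.I * π * α) * (Real.sin (π * α) : ℝ) / ((π : ℂ) * lam ^ k)) *
    (((Real.sin ((k + 1) * π * α) : ℝ) : ℂ) / ((Real.sin (π * α) : ℝ) : ℂ) -
      Complex.exp (Complex.I * k * π * α))

theorem Complex.exp_mul_I_mul_sin_succ_mul_sub (θ : ℂ) (k : ℕ) :
    exp (θ * I) * (sin ((k + 1) * θ) - sin θ * exp (k * θ * I)) = sin (k * θ) := by
  rw [add_mul, one_mul, sin_add, exp_mul_I, exp_mul_I]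
  linear_combination sin (k * θ) * sin_sq_add_cos_sq θ - sin (k * θ) * sin θ ^ 2 * I_sq

theorem aCoeff_eq (α : ℝ) (lam : ℂ) (k : ℕ) :
    aCoeff α lam k = -(Real.sin (k * (π * α)) : ℂ) / (π * lam ^ k) := by
  by_cases hσ : Real.sin (π * α) = 0
  · -- then `πα ∈ πℤ`, so both sides vanish
    obtain ⟨n, hn⟩ := Real.sin_eq_zero_iff.mp hσ
    have hσk : Real.sin (k * (π * α)) = 0 := by
      rw [← hn, ← mul_assoc, ← Int.cast_natCast, ← Int.cast_mul]
      exact Real.sin_int_mul_pi _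
    simp [aCoeff, hσ, hσk]
  · have key := Complex.exp_mul_I_mul_sin_succ_mul_sub (π * α) k
    have hσ' : Complex.sin (π * α) ≠ 0 := by exact_mod_cast hσ
    rw [aCoeff]
    push_cast
    rw [← key]
    field_simp

theorem hasSum_sin_mul_pow (θ : ℝ) {z : ℂ} (hz : ‖z‖ < 1) :
    HasSum (fun k : ℕ => (Real.sin (k * θ) : ℂ) * z ^ k)
      (Real.sin θ * z / (1 - 2 * Real.cos θ * z + z ^ 2)) := by
  have hprod : Complex.exp (θ * Complex.I) * Complex.exp (-θ * Complex.I) = 1 := by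
    rw [← Complex.exp_add]; simp
  have hcos : 2 * (Real.cos θ : ℂ) =
      Complex.exp (θ * Complex.I) + Complex.exp (-θ * Complex.I) := by
    rw [Complex.ofReal_cos, Complex.cos, neg_mul]; ring
  have hsin : 2 * Complex.I * (Real.sin θ : ℂ) =
      Complex.exp (θ * Complex.I) - Complex.exp (-θ * Complex.I) := by
    rw [Complex.ofReal_sin, Complex.sin, neg_mul]; ring_nf; rw [Complex.I_sq]; ring
  set ω := Complex.exp (θ * Complex.I)
  set ω' := Complex.exp (-θ * Complex.I)
  have hω : ‖ω * z‖ < 1 := by simpa [ω, Complex.norm_exp_ofReal_mul_I] using hz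
  have hω' : ‖ω' * z‖ < 1 := by
    simpa [ω', ← Complex.ofReal_neg, Complex.norm_exp_ofReal_mul_I] using hz
  have hne : 1 - ω * z ≠ 0 := sub_ne_zero.mpr fun h => by simp [← h] at hω
  have hne' : 1 - ω' * z ≠ 0 := sub_ne_zero.mpr fun h => by simp [← h] at hω'
  have hsum := ((hasSum_geometric_of_norm_lt_one hω').sub
    (hasSum_geometric_of_norm_lt_one hω)).mul_right (Complex.I / 2)
  have hval : (Real.sin θ : ℂ) * z / (1 - 2 * Real.cos θ * z + z ^ 2) =
      ((1 - ω' * z)⁻¹ - (1 - ω * z)⁻¹) * (Complex.I / 2) := by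
    have hfactor : 1 - 2 * Real.cos θ * z + z ^ 2 = (1 - ω * z) * (1 - ω' * z) := by
      linear_combination (-z) * hcos + z ^ 2 * hprod.symm
    rw [hfactor, inv_sub_inv hne' hne]
    field_simp
    congr 1
    linear_combination (-Complex.I * z) * hsin + 2 * z * (Real.sin θ : ℂ) * Complex.I_sq
  rw [hval]
  refine hsum.congr_fun fun k => ?_
  rw [Complex.ofReal_sin, Complex.sin, mul_pow, mul_pow, ← Complex.exp_nat_mul,
    ← Complex.exp_nat_mul]
  push_cast
  ring_nf

theorem stmt_12_general (α : ℝ) (hα : α ∈ Set.Ioo (0 : ℝ) 1)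
    (lam : ℂ)
    (v : ℝ) (hv : 0 < v) (hv' : v < ‖lam‖ ^ (1 / α)) :
    HasSum (fun k : ℕ => aCoeff α lam (k + 1) * ((v ^ ((k + 1 : ℕ) * α - 1) : ℝ) : ℂ))
      (-(lam * (Real.sin (π * α) : ℝ) / (π : ℂ)) * ((v ^ (α - 1) : ℝ) : ℂ) /
        (((v ^ (2 * α) : ℝ) : ℂ) - 2 * lam * ((v ^ α : ℝ) : ℂ) * (Real.cos (π * α) : ℝ) +
          lam ^ 2)) := by
  have hs : v ^ α < ‖lam‖ :=
    (Real.lt_rpow_inv_iff_of_pos hv.le (norm_nonneg _) hα.1).mp (by rwa [← one_div])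
  have hlam : lam ≠ 0 := norm_pos_iff.mp ((Real.rpow_pos_of_pos hv α).trans hs)
  have hz : ‖((v ^ α : ℝ) : ℂ) / lam‖ < 1 := by
    rwa [norm_div, Complex.norm_real, Real.norm_of_nonneg (by positivity),
      div_lt_one (norm_pos_iff.mpr hlam)]
  have hsum := ((hasSum_nat_add_iff' 1).mpr (hasSum_sin_mul_pow (π * α) hz)).mul_left
    (-1 / (π * v) : ℂ)
  simp only [Finset.sum_range_one, Nat.cast_zero, zero_mul, Real.sin_zero, Complex.ofReal_zero,
    sub_zero] at hsum
  have hvC : (v : ℂ) ≠ 0 := by exact_mod_cast hv.ne'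
  have hπ : (π : ℂ) ≠ 0 := by exact_mod_cast Real.pi_ne_zero
  rw [Real.rpow_sub hv, Real.rpow_one, mul_comm 2 α, Real.rpow_mul hv.le, Real.rpow_two]
  convert hsum using 1
  · rfl -- the two `AddCommMonoid ℂ` instances
  · funext k
    rw [aCoeff_eq, Real.rpow_sub hv, Real.rpow_one, mul_comm ((k + 1 : ℕ) : ℝ) α,
      Real.rpow_mul hv.le, Real.rpow_natCast]
    push_cast [div_pow]
    field_simp
  · push_cast
    field_simp
    ring

theorem stmt_12 (α : ℝ) (hα : α ∈ Set.Ioo (0 : ℝ) 1)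
    (lam : ℂ) (hlam : lam ≠ 0) (harg : lam.arg ∈ Set.Ioo (-(π * α)) (π * α))
    (v : ℝ) (hv : 0 < v) (hv' : v < ‖lam‖ ^ (1 / α)) :
    HasSum (fun k : ℕ => aCoeff α lam (k + 1) * ((v ^ ((k + 1 : ℕ) * α - 1) : ℝ) : ℂ))
      (-(lam * (Real.sin (π * α) : ℝ) / (π : ℂ)) * ((v ^ (α - 1) : ℝ) : ℂ) /
        (((v ^ (2 * α) : ℝ) : ℂ) - 2 * lam * ((v ^ α : ℝ) : ℂ) * (Real.cos (π * α) : ℝ) +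
          lam ^ 2)) :=
  stmt_12_general α hα lam v hv hv'
end

section
/- Let α > 0 and β > 0 be real, let λ ∈ ℂ, and let s > 0 be real with |λ| < s^α. Then the Laplace transform ∫₀^∞ e^{-s t} t^{β-1} E_{α,β}(λ t^α) dt converges and equals s^{α-β} / (s^α - λ). -/
open Real Set Filter MeasureTheory

/-- The two-parameter Mittag-Leffler function `E_{α,β}(z) = ∑ z^k / Γ(kα + β)`. -/
noncomputable def mittagLeffler (α β : ℝ) (z : ℂ) : ℂ :=
  ∑' k : ℕ, z ^ k / Complex.Gamma ((k * α + β : ℝ) : ℂ)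

lemma aux_int_rpow_exp {a r : ℝ} (ha : 0 < a) (hr : 0 < r) :
    MeasureTheory.IntegrableOn (fun t : ℝ => t ^ (a - 1) * Real.exp (-(r * t))) (Ioi 0) := by
  have h := Real.GammaIntegral_convergent ha
  rw [← mul_zero r, ← integrableOn_Ioi_comp_mul_left_iff _ _ hr] at h
  refine IntegrableOn.congr_fun (h.const_mul (r ^ (1 - a))) (fun t ht => ?_) measurableSet_Ioi
  have ht' : (0:ℝ) < t := ht
  rw [Real.mul_rpow hr.le ht'.le]
  rw [show r ^ (1 - a) * (Real.exp (-(r * t)) * (r ^ (a - 1) * t ^ (a - 1)))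
      = (r ^ (1 - a) * r ^ (a - 1)) * (t ^ (a - 1) * Real.exp (-(r * t))) by ring,
    ← Real.rpow_add hr]
  norm_num

theorem stmt_17 (α β : ℝ) (hα : 0 < α) (hβ : 0 < β) (lam : ℂ)
    (s : ℝ) (hs : 0 < s) (hls : ‖lam‖ < s ^ α) :
    MeasureTheory.IntegrableOn (fun t : ℝ =>
        Complex.exp (-(s * t : ℝ)) * ((t ^ (β - 1) : ℝ) : ℂ) *
          mittagLeffler α β (lam * ((t ^ α : ℝ) : ℂ)))
      (Set.Ioi 0) ∧
    (∫ t in Set.Ioi (0 : ℝ),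
        Complex.exp (-(s * t : ℝ)) * ((t ^ (β - 1) : ℝ) : ℂ) *
          mittagLeffler α β (lam * ((t ^ α : ℝ) : ℂ))) =
      ((s ^ (α - β) : ℝ) : ℂ) / (((s ^ α : ℝ) : ℂ) - lam) := by
  have hsa : (0:ℝ) < s ^ α := Real.rpow_pos_of_pos hs α
  set a : ℕ → ℝ := fun k => k * α + β with ha_def
  have ha_pos : ∀ k : ℕ, 0 < a k := fun k => by
    have : (0:ℝ) ≤ (k:ℝ) * α := by positivity
    simp only [ha_def]; linarith
  set F : ℕ → ℝ → ℂ := fun k t =>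
    Complex.exp (-(s * t : ℝ)) * ((t ^ (β - 1) : ℝ) : ℂ) *
      ((lam * ((t ^ α : ℝ) : ℂ)) ^ k / Complex.Gamma ((a k : ℝ) : ℂ)) with hF_def
  -- pointwise identity
  have key1 : ∀ t : ℝ, Complex.exp (-(s * t : ℝ)) * ((t ^ (β - 1) : ℝ) : ℂ) *
      mittagLeffler α β (lam * ((t ^ α : ℝ) : ℂ)) = ∑' k, F k t := by
    intro t
    rw [mittagLeffler, ← tsum_mul_left]
  -- norm identity on Ioi 0
  have key2 : ∀ (k : ℕ) (t : ℝ), t ∈ Ioi (0:ℝ) → ‖F k t‖ =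
      (‖lam‖ ^ k / Real.Gamma (a k)) * (t ^ (a k - 1) * Real.exp (-(s * t))) := by
    intro k t ht
    have ht' : (0:ℝ) < t := ht
    simp only [hF_def, norm_mul, norm_div, Complex.norm_exp,
      Complex.norm_real, Real.norm_eq_abs, norm_pow, Complex.norm_real, Complex.Gamma_ofReal,
      Complex.norm_exp, norm_mul]
    rw [abs_of_pos (Real.rpow_pos_of_pos ht' _), abs_of_pos (Real.Gamma_pos_of_pos (ha_pos k)),
      abs_of_pos (Real.rpow_pos_of_pos ht' _)]
    rw [mul_pow, ← Real.rpow_natCast (t ^ α) k, ← Real.rpow_mul ht'.le]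
    rw [show a k - 1 = (β - 1) + α * k by simp only [ha_def]; ring, Real.rpow_add ht']
    simp only [Complex.neg_re, Complex.ofReal_re]
    ring
  -- complex form on Ioi 0
  have key3 : ∀ (k : ℕ) (t : ℝ), t ∈ Ioi (0:ℝ) → F k t =
      (lam ^ k / Complex.Gamma ((a k : ℝ) : ℂ)) *
        ((t:ℂ) ^ (((a k : ℝ) : ℂ) - 1) * Complex.exp (-(↑s * ↑t))) := by
    intro k t ht
    have ht' : (0:ℝ) < t := ht
    have h1 : ((t:ℂ)) ^ (((a k : ℝ) : ℂ) - 1) = ((t ^ (a k - 1) : ℝ) : ℂ) := by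
      rw [Complex.ofReal_cpow ht'.le]; push_cast; ring_nf
    simp only [hF_def]
    rw [h1]
    have h2 : ((t ^ (a k - 1) : ℝ) : ℂ) = ((t ^ (β - 1) : ℝ) : ℂ) * ((t ^ (α * k) : ℝ) : ℂ) := by
      rw [← Complex.ofReal_mul, ← Real.rpow_add ht']
      norm_num [ha_def]; ring_nf
    have h3 : (((t ^ α : ℝ)) : ℂ) ^ k = ((t ^ (α * k) : ℝ) : ℂ) := by
      rw [← Complex.ofReal_pow, ← Real.rpow_natCast (t ^ α) k, ← Real.rpow_mul ht'.le]
    rw [h2, mul_pow, h3]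
    push_cast
    ring
  -- measurability of each term
  have hF_meas : ∀ k : ℕ, AEStronglyMeasurable (F k) (volume.restrict (Ioi (0:ℝ))) := by
    intro k
    apply Measurable.aestronglyMeasurable
    simp only [hF_def]
    fun_prop
  -- integrability of each term
  have hG_int : ∀ k : ℕ, MeasureTheory.IntegrableOn
      (fun t : ℝ => (‖lam‖ ^ k / Real.Gamma (a k)) * (t ^ (a k - 1) * Real.exp (-(s * t))))
      (Ioi 0) := fun k => (aux_int_rpow_exp (ha_pos k) hs).const_mul _
  have hF_int : ∀ k : ℕ, MeasureTheory.IntegrableOn (F k) (Ioi 0) := by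
    intro k
    refine Integrable.mono' (hG_int k) (hF_meas k) ?_
    filter_upwards [ae_restrict_mem measurableSet_Ioi] with t ht
    rw [key2 k t ht]
  -- value of the norm integral
  have hJ : ∀ k : ℕ, ∫ t in Ioi (0:ℝ), ‖F k t‖ = ‖lam‖ ^ k * (1 / s) ^ (a k) := by
    intro k
    rw [setIntegral_congr_fun measurableSet_Ioi (fun t ht => key2 k t ht),
      MeasureTheory.integral_const_mul, Real.integral_rpow_mul_exp_neg_mul_Ioi (ha_pos k) hs]
    have hΓ : Real.Gamma (a k) ≠ 0 := (Real.Gamma_pos_of_pos (ha_pos k)).ne'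
    field_simp
  -- summability of the norm integrals
  have hratio : ‖lam‖ * (s ^ α)⁻¹ < 1 := by
    rw [← div_eq_mul_inv, div_lt_one hsa]; exact hls
  have hratio0 : 0 ≤ ‖lam‖ * (s ^ α)⁻¹ := by positivity
  have hJ_eq : ∀ k : ℕ, ‖lam‖ ^ k * (1 / s) ^ (a k)
      = (1 / s) ^ β * (‖lam‖ * (s ^ α)⁻¹) ^ k := by
    intro k
    have h1 : (1 / s : ℝ) ^ (a k) = ((1/s) ^ α) ^ k * (1/s) ^ β := by
      simp only [ha_def]
      rw [Real.rpow_add (by positivity), mul_comm (k:ℝ) α, Real.rpow_mul (by positivity),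
        Real.rpow_natCast]
    have h2 : ((1:ℝ) / s) ^ α = (s ^ α)⁻¹ := by
      rw [one_div, Real.inv_rpow hs.le]
    rw [h1, h2, mul_pow]; ring
  have hJ_sum : Summable (fun k : ℕ => ‖lam‖ ^ k * (1 / s) ^ (a k)) := by
    refine Summable.congr (((summable_geometric_of_lt_one hratio0 hratio).mul_left
      ((1 / s) ^ β))) (fun k => (hJ_eq k).symm)
  -- lintegral of norms
  have hlint : ∀ k : ℕ, ∫⁻ t in Ioi (0:ℝ), ‖F k t‖₊ ∂volume
      = ENNReal.ofReal (‖lam‖ ^ k * (1 / s) ^ (a k)) := by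
    intro k
    rw [← hJ k]; exact (ofReal_integral_norm_eq_lintegral_enorm (hF_int k)).symm
  have htop : ∑' k : ℕ, ∫⁻ t in Ioi (0:ℝ), ‖F k t‖₊ ∂volume ≠ ⊤ := by
    simp only [hlint]
    rw [← ENNReal.ofReal_tsum_of_nonneg (fun k => by positivity) hJ_sum]
    exact ENNReal.ofReal_ne_top
  -- a.e. summability of norms
  have hf'' : ∀ k : ℕ, AEMeasurable (fun t => (‖F k t‖₊ : ENNReal)) (volume.restrict (Ioi (0:ℝ))) :=
    fun k => (hF_meas k).enorm
  have hae_sum : ∀ᵐ t ∂(volume.restrict (Ioi (0:ℝ))), Summable (fun k => ‖F k t‖) := by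
    have h1 : ∫⁻ t in Ioi (0:ℝ), ∑' k, (‖F k t‖₊ : ENNReal) ∂volume ≠ ⊤ := by
      rwa [lintegral_tsum hf'']
    refine (ae_lt_top' (AEMeasurable.ennreal_tsum hf'') h1).mono (fun t ht => ?_)
    have := ENNReal.tsum_coe_ne_top_iff_summable_coe.mp ht.ne
    simpa [coe_nnnorm] using this
  -- measurability of the sum
  have hmeas_sum : AEStronglyMeasurable (fun t => ∑' k, F k t) (volume.restrict (Ioi (0:ℝ))) := by
    refine aestronglyMeasurable_of_tendsto_ae atTop
      (f := fun n t => ∑ k ∈ Finset.range n, F k t)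
      (fun n => Finset.aestronglyMeasurable_fun_sum _ (fun k _ => hF_meas k)) ?_
    filter_upwards [hae_sum] with t ht
    exact ((ht.of_norm).hasSum.tendsto_sum_nat)
  -- finite integral of the sum
  have hfin : HasFiniteIntegral (fun t => ∑' k, F k t) (volume.restrict (Ioi (0:ℝ))) := by
    simp only [HasFiniteIntegral]
    calc ∫⁻ t in Ioi (0:ℝ), ‖∑' k, F k t‖₊ ∂volume
        ≤ ∫⁻ t in Ioi (0:ℝ), ∑' k, (‖F k t‖₊ : ENNReal) ∂volume := by
          refine lintegral_mono_ae ?_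
          filter_upwards [hae_sum] with t ht
          have hnn : Summable (fun k => ‖F k t‖₊) := by
            rw [← NNReal.summable_coe]; simpa [coe_nnnorm] using ht
          calc (‖∑' k, F k t‖₊ : ENNReal) ≤ ((∑' k, ‖F k t‖₊ : NNReal) : ENNReal) :=
                ENNReal.coe_le_coe.mpr (nnnorm_tsum_le hnn)
            _ = ∑' k, (‖F k t‖₊ : ENNReal) := ENNReal.coe_tsum hnn
      _ = ∑' k, ∫⁻ t in Ioi (0:ℝ), ‖F k t‖₊ ∂volume := lintegral_tsum hf''
      _ < ⊤ := htop.lt_top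
  have heq : (fun t : ℝ => Complex.exp (-(s * t : ℝ)) * ((t ^ (β - 1) : ℝ) : ℂ) *
      mittagLeffler α β (lam * ((t ^ α : ℝ) : ℂ))) = fun t => ∑' k, F k t := funext key1
  constructor
  · rw [IntegrableOn, heq]
    exact ⟨hmeas_sum, hfin⟩
  · -- value of each integral
    have hint_val : ∀ k : ℕ, ∫ t in Ioi (0:ℝ), F k t
        = lam ^ k * (((1 / s) ^ (a k) : ℝ) : ℂ) := by
      intro k
      rw [setIntegral_congr_fun measurableSet_Ioi (key3 k), MeasureTheory.integral_const_mul,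
        Complex.integral_cpow_mul_exp_neg_mul_Ioi
          (show 0 < (((a k : ℝ) : ℂ)).re by simpa using ha_pos k) hs]
      have hΓ : Complex.Gamma ((a k : ℝ) : ℂ) ≠ 0 := by
        rw [Complex.Gamma_ofReal]
        exact_mod_cast (Real.Gamma_pos_of_pos (ha_pos k)).ne'
      rw [show ((1 : ℂ) / (s : ℂ)) ^ (((a k : ℝ)) : ℂ) = (((1 / s) ^ (a k) : ℝ) : ℂ) by
        rw [← Complex.ofReal_one, ← Complex.ofReal_div, Complex.ofReal_cpow (by positivity)]]
      field_simp
    rw [heq, integral_tsum hF_meas htop]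
    simp only [hint_val]
    -- sum the geometric series
    have hw : ‖lam * (((s ^ α)⁻¹ : ℝ) : ℂ)‖ < 1 := by
      rw [norm_mul, Complex.norm_real, Real.norm_eq_abs,
        abs_of_pos (by positivity : (0:ℝ) < (s ^ α)⁻¹)]
      exact hratio
    have hterm : ∀ k : ℕ, lam ^ k * (((1 / s) ^ (a k) : ℝ) : ℂ)
        = (((1 / s) ^ β : ℝ) : ℂ) * (lam * (((s ^ α)⁻¹ : ℝ) : ℂ)) ^ k := by
      intro k
      have h1 : ((1 / s : ℝ)) ^ (a k) = ((s ^ α)⁻¹) ^ k * (1 / s) ^ β := by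
        simp only [ha_def]
        rw [Real.rpow_add (by positivity), mul_comm (k:ℝ) α, Real.rpow_mul (by positivity),
          Real.rpow_natCast, one_div, Real.inv_rpow hs.le]
      rw [h1, mul_pow]
      push_cast
      ring
    rw [tsum_congr hterm, tsum_mul_left, tsum_geometric_of_norm_lt_one hw]
    -- final algebra
    have hne : ((s ^ α : ℝ) : ℂ) - lam ≠ 0 := by
      intro h
      rw [sub_eq_zero] at h
      rw [← h] at hls
      simp [Complex.norm_real, abs_of_pos hsa] at hls
    have hsane : ((s ^ α : ℝ) : ℂ) ≠ 0 := by
      exact_mod_cast hsa.ne'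
    have h2 : (1 : ℂ) - lam * (((s ^ α)⁻¹ : ℝ) : ℂ)
        = (((s ^ α : ℝ) : ℂ) - lam) * (((s ^ α)⁻¹ : ℝ) : ℂ) := by
      push_cast
      field_simp
    rw [h2]
    have h3 : ((s ^ (α - β) : ℝ) : ℂ) = (((1 / s) ^ β : ℝ) : ℂ) * ((s ^ α : ℝ) : ℂ) := by
      rw [← Complex.ofReal_mul, Complex.ofReal_inj, one_div, Real.inv_rpow hs.le,
        Real.rpow_sub hs]
      field_simp
    rw [h3]
    rw [mul_inv, ← Complex.ofReal_inv, inv_inv]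
    field_simp
end

section
/- Let α ∈ (1/2, 1), let λ ∈ ℂ with Re(λ) > 0, and let s be real with 0 < s < α. Define g(u) = ∫₀^∞ e^{-(λ - u^α cos(πα)) v} sin(u^α v sin(πα)) dv for u > 0 (the inner integral converges since Re(λ) > 0 > u^α cos(πα) for α ∈ (1/2,1)). Then the Mellin transform ∫₀^∞ u^{s-1} g(u) du converges and equals π λ^{s/α - 1} sin(π(1-α)s/α) / (α sin(sπ/α)). -/
/-!
Expanding `sin (t v sin θ)` into exponentials, the inner Laplace integral at `t = u ^ α`,
`θ = π α` equals `(i/2) ((λ + e^{i(π-θ)} t)⁻¹ - (λ + e^{-i(π-θ)} t)⁻¹)`. For `Re λ, Re c > 0` and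
`0 < Re p < 1`, the Mellin transform of `t ↦ (λ + c t)⁻¹` at `p` is `Γ(p) Γ(1-p) c^{-p} λ^{p-1}`:
write the inverse as `∫₀^∞ e^{-(λ + c t) w} dw`, swap the integrals, and use
`∫₀^∞ t^{a-1} e^{-z t} dt = Γ(a) z^{-a}`, which extends from real to complex `z` with `Re z > 0` by
the identity theorem. The two factors `c^{-p}` combine to `sin (p (π - θ))`, the substitution
`t = u ^ α` turns the Mellin variable `s` into `s / α`, and `Γ(p) Γ(1-p) = π / sin (π p)`.
-/

open Real Set Filter MeasureTheory Complex Topology Asymptotics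

lemma integrableOn_cexp_neg_mul {z : ℂ} (hz : 0 < z.re) :
    IntegrableOn (fun v : ℝ => cexp (-(z * v))) (Ioi 0) := by
  simpa only [neg_mul] using integrableOn_exp_mul_complex_Ioi (a := -z) (by simpa using hz) 0

lemma integral_cexp_neg_mul {z : ℂ} (hz : 0 < z.re) :
    ∫ v in Ioi (0 : ℝ), cexp (-(z * v)) = z⁻¹ := by
  have h := integral_exp_mul_complex_Ioi (a := -z) (by simpa using hz) 0
  simp only [neg_mul, ofReal_zero, mul_zero, Complex.exp_zero, neg_div_neg_eq, one_div] at h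
  exact h

lemma integral_cexp_neg_mul_mul_sin {z : ℂ} (hz : 0 < z.re) (b : ℝ) :
    ∫ v in Ioi (0 : ℝ), cexp (-z * v) * (Real.sin (b * v) : ℂ) =
      I / 2 * ((z + b * I)⁻¹ - (z - b * I)⁻¹) := by
  have hz_add : 0 < (z + b * I).re := by simpa using hz
  have hz_sub : 0 < (z - b * I).re := by simpa using hz
  have h_sin : ∀ v : ℝ, cexp (-z * v) * (Real.sin (b * v) : ℂ) =
      I / 2 * (cexp (-((z + b * I) * v)) - cexp (-((z - b * I) * v))) := by
    intro v
    rw [ofReal_sin, Complex.sin,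
      show -((z + b * I) * v) = -z * v + -↑(b * v) * I by push_cast; ring,
      show -((z - b * I) * v) = -z * v + ↑(b * v) * I by push_cast; ring, Complex.exp_add,
      Complex.exp_add]
    ring
  simp_rw [h_sin]
  rw [integral_const_mul, integral_sub (integrableOn_cexp_neg_mul hz_add)
    (integrableOn_cexp_neg_mul hz_sub), integral_cexp_neg_mul hz_add, integral_cexp_neg_mul hz_sub]

lemma norm_cpow_smul_cexp_neg_mul {t : ℝ} (ht : 0 < t) (a z : ℂ) :
    ‖(t : ℂ) ^ (a - 1) • cexp (-(z * t))‖ = t ^ (a.re - 1) * rexp (-(z.re * t)) := by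
  rw [norm_smul, norm_cpow_eq_rpow_re_of_pos ht, Complex.norm_exp]
  simp

lemma mellinConvergent_cexp_neg_mul {a z : ℂ} (ha : 0 < a.re) (hz : 0 < z.re) :
    MellinConvergent (fun t : ℝ => cexp (-(z * t))) a := by
  refine Integrable.mono' (g := fun t => t ^ (a.re - 1) * rexp (-(z.re * t))) ?_ (by fun_prop) ?_
  · have h := integrableOn_rpow_mul_exp_neg_mul_rpow (s := a.re - 1) (by linarith) zero_lt_one hz
    simp only [rpow_one, neg_mul] at h
    exact h
  · filter_upwards [ae_restrict_mem measurableSet_Ioi] with t ht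
    exact (norm_cpow_smul_cexp_neg_mul ht a z).le

lemma mellin_cexp_neg_ofReal_mul {a : ℂ} (ha : 0 < a.re) {r : ℝ} (hr : 0 < r) :
    mellin (fun t : ℝ => cexp (-(r * t))) a = Complex.Gamma a * (r : ℂ) ^ (-a) := by
  have h := mellin_comp_mul_left (fun t : ℝ => ((rexp (-t) : ℝ) : ℂ)) a hr
  rw [← GammaIntegral_eq_mellin, ← Complex.Gamma_eq_integral ha] at h
  simp only [ofReal_exp, ofReal_neg, ofReal_mul] at h
  rw [h, smul_eq_mul, mul_comm]

lemma differentiableAt_mellin_cexp_neg_mul {a z₀ : ℂ} (ha : 0 < a.re) (hz₀ : 0 < z₀.re) :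
    DifferentiableAt ℂ (fun z => mellin (fun t : ℝ => cexp (-(z * t))) a) z₀ := by
  have hε : 0 < z₀.re / 2 := by positivity
  refine (hasDerivAt_integral_of_dominated_loc_of_deriv_le (μ := volume.restrict (Ioi 0))
    (F := fun z (t : ℝ) => (t : ℂ) ^ (a - 1) • cexp (-(z * t)))
    -- the exponent `a + 1 - 1` makes the bound the Mellin integrand at `a + 1`
    (F' := fun z (t : ℝ) => -((t : ℂ) ^ (a + 1 - 1) • cexp (-(z * t))))
    (bound := fun t => t ^ ((a + 1).re - 1) * rexp (-((z₀ / 2).re * t)))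
    (Metric.ball_mem_nhds z₀ hε) (.of_forall fun z => by fun_prop)
    (mellinConvergent_cexp_neg_mul ha hz₀) (by fun_prop) ?_ ?_ ?_).2.differentiableAt
  · filter_upwards [ae_restrict_mem measurableSet_Ioi] with t ht z hz
    have hz_re : z₀.re / 2 < z.re := by
      have := (abs_re_le_norm (z - z₀)).trans_lt (mem_ball_iff_norm.mp hz)
      rw [sub_re] at this
      linarith [neg_abs_le (z.re - z₀.re)]
    rw [norm_neg, norm_cpow_smul_cexp_neg_mul ht]
    refine mul_le_mul_of_nonneg_left (exp_le_exp.mpr ?_) (rpow_nonneg ht.out.le _)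
    have : (z₀ / 2).re = z₀.re / 2 := by simp
    rw [this]
    nlinarith [ht.out]
  · refine ((mellinConvergent_cexp_neg_mul (a := a + 1) (z := z₀ / 2) (by simp; linarith)
      (by simpa using hε)).norm).congr ?_
    filter_upwards [ae_restrict_mem measurableSet_Ioi] with t ht
    exact norm_cpow_smul_cexp_neg_mul ht _ _
  · filter_upwards [ae_restrict_mem measurableSet_Ioi] with t ht z _
    have ht' : (t : ℂ) ≠ 0 := ofReal_ne_zero.mpr ht.ne'
    refine ((((hasDerivAt_id z).mul_const (t : ℂ)).neg.cexp).const_mul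
      ((t : ℂ) ^ (a - 1))).congr_deriv ?_
    rw [add_sub_cancel_right, smul_eq_mul, show a = a - 1 + 1 by ring, cpow_add _ _ ht', cpow_one]
    simp only [Pi.neg_apply, id]
    ring_nf

lemma mellin_cexp_neg_mul {a z : ℂ} (ha : 0 < a.re) (hz : 0 < z.re) :
    mellin (fun t : ℝ => cexp (-(z * t))) a = Complex.Gamma a * z ^ (-a) := by
  have hU : IsOpen {z : ℂ | 0 < z.re} := isOpen_lt continuous_const continuous_re
  have hF : AnalyticOnNhd ℂ (fun z => mellin (fun t : ℝ => cexp (-(z * t))) a) {z | 0 < z.re} :=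
    DifferentiableOn.analyticOnNhd
      (fun z hz => (differentiableAt_mellin_cexp_neg_mul ha hz).differentiableWithinAt) hU
  have hG : AnalyticOnNhd ℂ (fun z => Complex.Gamma a * z ^ (-a)) {z | 0 < z.re} :=
    DifferentiableOn.analyticOnNhd (fun z hz =>
      ((differentiableAt_id.cpow_const (Or.inl hz)).const_mul _).differentiableWithinAt) hU
  have h_ofReal : Tendsto ((↑) : ℝ → ℂ) (𝓝[≠] 1) (𝓝[≠] 1) := by
    rw [tendsto_nhdsWithin_iff]
    exact ⟨tendsto_nhdsWithin_of_tendsto_nhds continuous_ofReal.continuousAt,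
      eventually_nhdsWithin_iff.mpr (.of_forall fun t ht => ofReal_ne_one.mpr ht)⟩
  refine hF.eqOn_of_preconnected_of_frequently_eq hG (convex_halfSpace_re_gt 0).isPreconnected
    (z₀ := 1) (by simp) (h_ofReal.frequently ?_) hz
  refine (Eventually.filter_mono nhdsWithin_le_nhds ?_).frequently
  filter_upwards [eventually_gt_nhds zero_lt_one] with r hr
  exact mellin_cexp_neg_ofReal_mul ha hr

lemma integrableOn_rpow_mul_inv_add_mul {a b σ : ℝ} (ha : 0 < a) (hb : 0 < b) (hσ0 : 0 < σ)
    (hσ1 : σ < 1) : IntegrableOn (fun t : ℝ => t ^ (σ - 1) * (a + b * t)⁻¹) (Ioi 0) := by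
  have h_pos : ∀ t ∈ Ici (0 : ℝ), 0 < a + b * t := fun t ht => by nlinarith [ht.out]
  refine mellin_convergent_of_isBigO_scalar (a := 1) (b := 0) ?_ ?_ hσ1 ?_ hσ0
  · refine ContinuousOn.locallyIntegrableOn ?_ measurableSet_Ioi
    exact ContinuousOn.inv₀ (by fun_prop) fun t ht => (h_pos t (Ioi_subset_Ici_self ht)).ne'
  · refine IsBigO.of_bound b⁻¹ ?_
    filter_upwards [eventually_gt_atTop 0] with t ht
    rw [norm_inv, norm_of_nonneg (h_pos t ht.le).le, rpow_neg_one, norm_inv, norm_of_nonneg ht.le,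
      ← mul_inv]
    exact inv_anti₀ (by positivity) (by linarith)
  · have h_cont : ContinuousAt (fun t : ℝ => (a + b * t)⁻¹) 0 :=
      ContinuousAt.inv₀ (by fun_prop) (h_pos 0 self_mem_Ici).ne'
    simpa only [neg_zero, rpow_zero] using
      (h_cont.tendsto.isBigO_one ℝ).mono nhdsWithin_le_nhds

lemma hasMellin_inv_add_mul {lam c p : ℂ} (hlam : 0 < lam.re) (hc : 0 < c.re) (hp0 : 0 < p.re)
    (hp1 : p.re < 1) :
    HasMellin (fun t : ℝ => (lam + c * t)⁻¹) p
      (Complex.Gamma p * Complex.Gamma (1 - p) * c ^ (-p) * lam ^ (p - 1)) := by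
  set H : ℝ × ℝ → ℂ := fun q => (q.1 : ℂ) ^ (p - 1) • cexp (-((lam + c * q.1) * q.2)) with hH
  have h_re : ∀ t : ℝ, 0 ≤ t → 0 < (lam + c * t).re := fun t ht => by
    simpa using add_pos_of_pos_of_nonneg hlam (mul_nonneg hc.le ht)
  have h_inner_w : ∀ t ∈ Ioi (0 : ℝ),
      ∫ w in Ioi (0 : ℝ), H (t, w) = (t : ℂ) ^ (p - 1) • (lam + c * t)⁻¹ := fun t ht => by
    simp only [hH]
    rw [integral_smul, integral_cexp_neg_mul (h_re t ht.out.le)]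
  have h_int : Integrable H ((volume.restrict (Ioi 0)).prod (volume.restrict (Ioi 0))) := by
    rw [integrable_prod_iff (by fun_prop : Measurable H).aestronglyMeasurable]
    refine ⟨?_, ?_⟩
    · filter_upwards [ae_restrict_mem measurableSet_Ioi] with t ht
      exact (integrableOn_cexp_neg_mul (h_re t ht.out.le)).smul ((t : ℂ) ^ (p - 1))
    · refine (integrableOn_rpow_mul_inv_add_mul hlam hc hp0 hp1).congr ?_
      filter_upwards [ae_restrict_mem measurableSet_Ioi] with t ht
      have h_pos : 0 < lam.re + c.re * t := by simpa using h_re t ht.out.le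
      have h_norm : ∀ w : ℝ, ‖H (t, w)‖ = t ^ (p.re - 1) * rexp (-(lam.re + c.re * t) * w) := by
        intro w
        simp only [hH, norm_smul, norm_cpow_eq_rpow_re_of_pos ht, Complex.norm_exp]
        congr 2
        simp only [neg_re, mul_re, add_re, ofReal_re, ofReal_im]
        ring
      have h_exp := integral_exp_mul_Ioi (neg_lt_zero.mpr h_pos) 0
      simp only [mul_zero, Real.exp_zero, neg_div_neg_eq, one_div] at h_exp
      simp only [h_norm, integral_const_mul, h_exp]
  have h_inner_t : ∀ w ∈ Ioi (0 : ℝ), ∫ t in Ioi (0 : ℝ), H (t, w) =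
      Complex.Gamma p * c ^ (-p) * ((w : ℂ) ^ ((1 - p) - 1) • cexp (-(lam * w))) := fun w hw => by
    have h := mellin_comp_mul_left (fun t : ℝ => cexp (-(c * t))) p hw
    rw [mellin_cexp_neg_mul hp0 hc] at h
    simp only [mellin, ofReal_mul] at h
    have h_split : ∀ t : ℝ, (t : ℂ) ^ (p - 1) • cexp (-((lam + c * t) * w)) =
        cexp (-(lam * w)) * ((t : ℂ) ^ (p - 1) • cexp (-(c * (w * t)))) := fun t => by
      rw [smul_eq_mul, smul_eq_mul, show -((lam + c * t) * w) = -(lam * w) + -(c * (w * t)) by ring,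
        Complex.exp_add]
      ring
    simp only [hH]
    simp_rw [h_split]
    rw [integral_const_mul, h, sub_sub_cancel_left, smul_eq_mul, smul_eq_mul]
    ring
  refine ⟨h_int.integral_prod_left.congr ?_, ?_⟩
  · filter_upwards [ae_restrict_mem measurableSet_Ioi] with t ht
    exact h_inner_w t ht
  · calc mellin (fun t : ℝ => (lam + c * t)⁻¹) p
        = ∫ t in Ioi (0 : ℝ), ∫ w in Ioi (0 : ℝ), H (t, w) :=
          (setIntegral_congr_fun measurableSet_Ioi h_inner_w).symm
      _ = ∫ w in Ioi (0 : ℝ), ∫ t in Ioi (0 : ℝ), H (t, w) := integral_integral_swap h_int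
      _ = Complex.Gamma p * c ^ (-p) * mellin (fun w : ℝ => cexp (-(lam * w))) (1 - p) := by
          rw [setIntegral_congr_fun measurableSet_Ioi h_inner_t, integral_const_mul]; rfl
      _ = _ := by
          rw [mellin_cexp_neg_mul (by simpa using hp1) hlam, neg_sub]
          ring

lemma cexp_mul_I_cpow {φ : ℝ} (hφ : φ ∈ Ioc (-π) π) (w : ℂ) :
    cexp (φ * I) ^ w = cexp (w * (φ * I)) := by
  rw [cpow_def_of_ne_zero (Complex.exp_ne_zero _), Complex.log_exp (by simpa using hφ.1)
    (by simpa using hφ.2), mul_comm]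

/-- The paper's `g (u)` is `laplaceExpSin λ (π α) (u ^ α)`. -/
noncomputable def laplaceExpSin (lam : ℂ) (θ t : ℝ) : ℂ :=
  ∫ v in Ioi (0 : ℝ), cexp (-(lam - ((t * Real.cos θ : ℝ) : ℂ)) * v) *
    ((Real.sin (t * v * Real.sin θ) : ℝ) : ℂ)

lemma hasMellin_laplaceExpSin {lam : ℂ} (hlam : 0 < lam.re) {θ : ℝ}
    (hθ : θ ∈ Ioo (π / 2) (3 * π / 2)) {p : ℂ} (hp0 : 0 < p.re) (hp1 : p.re < 1) :
    HasMellin (laplaceExpSin lam θ) p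
      (Complex.Gamma p * Complex.Gamma (1 - p) * lam ^ (p - 1) * Complex.sin (p * (π - θ))) := by
  obtain ⟨hθ₁, hθ₂⟩ := hθ
  have hφ : π - θ ∈ Ioo (-(π / 2)) (π / 2) := ⟨by linarith, by linarith⟩
  have hφ' : -(π - θ) ∈ Ioo (-(π / 2)) (π / 2) := ⟨by linarith, by linarith⟩
  have h_re : ∀ φ ∈ Ioo (-(π / 2)) (π / 2), 0 < (cexp (φ * I)).re := fun φ hφ => by
    rw [exp_ofReal_mul_I_re]; exact Real.cos_pos_of_mem_Ioo hφ
  have h_log : ∀ φ ∈ Ioo (-(π / 2)) (π / 2), φ ∈ Ioc (-π) π := fun φ hφ =>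
    ⟨by linarith [hφ.1, pi_pos], by linarith [hφ.2, pi_pos]⟩
  set c := cexp (((π - θ : ℝ) : ℂ) * I) with hc_def
  set c' := cexp (((-(π - θ) : ℝ) : ℂ) * I) with hc'_def
  have h_inner : ∀ t ∈ Ioi (0 : ℝ), laplaceExpSin lam θ t =
      (I / 2) • ((lam + c * t)⁻¹ - (lam + c' * t)⁻¹) := by
    intro t ht
    have hz : 0 < (lam - ((t * Real.cos θ : ℝ) : ℂ)).re := by
      have : Real.cos θ < 0 := cos_neg_of_pi_div_two_lt_of_lt hθ₁ (by linarith)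
      simp only [sub_re, ofReal_re]; nlinarith [ht.out]
    rw [laplaceExpSin]
    simp_rw [show ∀ v, t * v * Real.sin θ = t * Real.sin θ * v from fun v => by ring]
    have hc : c = -Real.cos θ + Real.sin θ * I := by
      rw [hc_def, exp_mul_I, ← ofReal_cos, ← ofReal_sin, Real.cos_pi_sub, Real.sin_pi_sub,
        ofReal_neg]
    have hc' : c' = -Real.cos θ - Real.sin θ * I := by
      rw [hc'_def, exp_mul_I, ← ofReal_cos, ← ofReal_sin, Real.cos_neg, Real.sin_neg,
        Real.cos_pi_sub, Real.sin_pi_sub, ofReal_neg, ofReal_neg]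
      ring
    rw [integral_cexp_neg_mul_mul_sin hz, smul_eq_mul, hc, hc']
    push_cast
    ring_nf
  have h_c := hasMellin_inv_add_mul hlam (h_re _ hφ) hp0 hp1
  have h_c' := hasMellin_inv_add_mul hlam (h_re _ hφ') hp0 hp1
  obtain ⟨h_conv, h_val⟩ := hasMellin_const_smul (hasMellin_sub h_c.1 h_c'.1).1 (I / 2)
  have h_eq : EqOn
      (fun t : ℝ => (t : ℂ) ^ (p - 1) • ((I / 2) • ((lam + c * t)⁻¹ - (lam + c' * t)⁻¹)))
      (fun t : ℝ => (t : ℂ) ^ (p - 1) • laplaceExpSin lam θ t) (Ioi 0) := fun t ht => by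
    simp only [h_inner t ht]
  refine ⟨IntegrableOn.congr_fun h_conv h_eq measurableSet_Ioi, ?_⟩
  rw [mellin, ← setIntegral_congr_fun measurableSet_Ioi h_eq]
  change mellin _ p = _
  rw [h_val, (hasMellin_sub h_c.1 h_c'.1).2, h_c.2, h_c'.2, cexp_mul_I_cpow (h_log _ hφ),
    cexp_mul_I_cpow (h_log _ hφ'), Complex.sin, smul_eq_mul]
  push_cast
  ring_nf

theorem stmt_18 (α : ℝ) (hα : α ∈ Set.Ioo (1 / 2 : ℝ) 1)
    (lam : ℂ) (hlam : 0 < lam.re) (s : ℝ) (hs : 0 < s) (hsα : s < α) :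
    MeasureTheory.IntegrableOn (fun u : ℝ =>
        ((u ^ (s - 1) : ℝ) : ℂ) *
          ∫ v in Set.Ioi (0 : ℝ),
            Complex.exp (-(lam - ((u ^ α * Real.cos (π * α) : ℝ) : ℂ)) * (v : ℂ)) *
              ((Real.sin (u ^ α * v * Real.sin (π * α)) : ℝ) : ℂ))
      (Set.Ioi 0) ∧
    (∫ u in Set.Ioi (0 : ℝ),
        ((u ^ (s - 1) : ℝ) : ℂ) *
          ∫ v in Set.Ioi (0 : ℝ),
            Complex.exp (-(lam - ((u ^ α * Real.cos (π * α) : ℝ) : ℂ)) * (v : ℂ)) *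
              ((Real.sin (u ^ α * v * Real.sin (π * α)) : ℝ) : ℂ)) =
      (π : ℂ) * lam ^ ((s / α - 1 : ℝ) : ℂ) * ((Real.sin (π * (1 - α) * s / α) : ℝ) : ℂ) /
        ((α : ℂ) * ((Real.sin (s * π / α) : ℝ) : ℂ)) := by
  obtain ⟨hα₁, hα₂⟩ := hα
  have hα₀ : 0 < α := by linarith
  have hp0 : 0 < ((s : ℂ) / α).re := by rw [← ofReal_div, ofReal_re]; positivity
  have hp1 : ((s : ℂ) / α).re < 1 := by rw [← ofReal_div, ofReal_re, div_lt_one hα₀]; exact hsα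
  obtain ⟨h_conv, h_val⟩ := hasMellin_laplaceExpSin hlam (θ := π * α)
    ⟨by nlinarith [pi_pos], by nlinarith [pi_pos]⟩ hp0 hp1
  have h_eq : EqOn (fun u : ℝ => (u : ℂ) ^ ((s : ℂ) - 1) • laplaceExpSin lam (π * α) (u ^ α))
      (fun u : ℝ => ((u ^ (s - 1) : ℝ) : ℂ) * ∫ v in Ioi (0 : ℝ),
        cexp (-(lam - ((u ^ α * Real.cos (π * α) : ℝ) : ℂ)) * v) *
          ((Real.sin (u ^ α * v * Real.sin (π * α)) : ℝ) : ℂ)) (Ioi 0) := fun u hu => by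
    simp only [laplaceExpSin, smul_eq_mul, ofReal_cpow hu.out.le, ofReal_sub, ofReal_one]
  refine ⟨((MellinConvergent.comp_rpow hα₀.ne').mpr h_conv).congr_fun h_eq measurableSet_Ioi, ?_⟩
  rw [← setIntegral_congr_fun measurableSet_Ioi h_eq]
  change mellin (fun u : ℝ => laplaceExpSin lam (π * α) (u ^ α)) s = _
  rw [mellin_comp_rpow, h_val, Complex.Gamma_mul_Gamma_one_sub, abs_of_pos hα₀, real_smul,
    ofReal_sin, ofReal_sin]
  push_cast
  rw [show (s : ℂ) / α * (π - π * α) = π * (1 - α) * s / α by field_simp,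
    show (π : ℂ) * (s / α) = s * π / α by ring]
  field_simp
end
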